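/- arXiv:2204.07423 — 10 statements merged into one kernel-verified Lean document; each statement's English description precedes it below -/
import Mathlib

section
/- For any maximal matching M in a graph G with no isolated vertices, the sum of degrees of matched vertices is at least the sum of degrees of unmatched vertices plus 2|M|. -/
open scoped Classical

/-- `M` is a matching in `G`, represented as a finite set of edges:
every element of `M` is an edge of `G`, and no two distinct edges of `M`
share a vertex. -/
def IsMatchingSet {V : Type*} (G : SimpleGraph V) (M : Finset (Sym2 V)) : Prop :=
  (∀ e ∈ M, e ∈ G.edgeSet) ∧
  ∀ e ∈ M, ∀ f ∈ M, e ≠ f → ∀ v : V, ¬(v ∈ e ∧ v ∈ f)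

/-- `M` is a maximal matching in `G`: it is a matching and no edge of `G`
can be added to it while keeping it a matching. -/
def IsMaximalMatchingSet {V : Type*} (G : SimpleGraph V) (M : Finset (Sym2 V)) : Prop :=
  IsMatchingSet G M ∧ ∀ e ∈ G.edgeSet, e ∉ M → ¬ IsMatchingSet G (insert e M)

/-- The set `V_M` of vertices covered (matched) by the matching `M`. -/
noncomputable def matchedSet {V : Type*} [Fintype V] (M : Finset (Sym2 V)) : Finset V :=
  Finset.univ.filter (fun v => ∃ e ∈ M, v ∈ e)

/-- For any maximal matching `M` in a graph `G` with no isolated vertices,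
the sum of degrees of matched vertices is at least the sum of degrees of
unmatched vertices plus `2|M|`. -/
theorem sum_deg_matched_ge_sum_deg_unmatched_add
    {V : Type*} [Fintype V] (G : SimpleGraph V)
    (hiso : ∀ v : V, 0 < G.degree v)
    (M : Finset (Sym2 V)) (hM : IsMaximalMatchingSet G M) :
    ∑ u ∈ (matchedSet M)ᶜ, G.degree u + 2 * M.card ≤ ∑ v ∈ matchedSet M, G.degree v := by
  classical
  obtain ⟨⟨hedge, hdisj⟩, hmax⟩ := hM
  set W : Finset V := matchedSet M with hWdef
  have hmemW : ∀ v : V, v ∈ W ↔ ∃ e ∈ M, v ∈ e := by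
    intro v; simp [hWdef, matchedSet]
  -- unmatched set is independent
  have hind : ∀ u ∈ Wᶜ, ∀ w ∈ Wᶜ, ¬ G.Adj u w := by
    intro u hu w hw hadj
    have huW : u ∉ W := Finset.mem_compl.mp hu
    have hwW : w ∉ W := Finset.mem_compl.mp hw
    have he : s(u, w) ∈ G.edgeSet := hadj
    have hnm : s(u, w) ∉ M := fun h => huW ((hmemW u).mpr ⟨_, h, by simp⟩)
    refine hmax _ he hnm ⟨?_, ?_⟩
    · intro e hee
      rcases Finset.mem_insert.mp hee with rfl | h
      · exact he
      · exact hedge _ h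
    · intro e he' f hf' hne v hv
      rcases Finset.mem_insert.mp he' with rfl | heM <;>
        rcases Finset.mem_insert.mp hf' with rfl | hfM
      · exact hne rfl
      · rcases Sym2.mem_iff.mp hv.1 with rfl | rfl
        · exact huW ((hmemW v).mpr ⟨f, hfM, hv.2⟩)
        · exact hwW ((hmemW v).mpr ⟨f, hfM, hv.2⟩)
      · rcases Sym2.mem_iff.mp hv.2 with rfl | rfl
        · exact huW ((hmemW v).mpr ⟨e, heM, hv.1⟩)
        · exact hwW ((hmemW v).mpr ⟨e, heM, hv.1⟩)
      · exact hdisj e heM f hfM hne v hv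
  -- |W| = 2 |M|
  have hcard2 : ∀ e ∈ M, (Finset.univ.filter (fun v => v ∈ e)).card = 2 := by
    intro e heM
    induction e with
    | h a b =>
      have hab : a ≠ b := by
        have := hedge _ heM
        rw [SimpleGraph.mem_edgeSet] at this
        exact this.ne
      have : (Finset.univ.filter (fun v => v ∈ s(a, b))) = {a, b} := by
        ext v; simp [Sym2.mem_iff]
      rw [this, Finset.card_insert_of_notMem (by simp [hab]), Finset.card_singleton]
  have hWbi : W = M.biUnion (fun e => Finset.univ.filter (fun v => v ∈ e)) := by
    ext v; simp [hmemW]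
  have hWcard : W.card = 2 * M.card := by
    rw [hWbi, Finset.card_biUnion]
    · rw [Finset.sum_congr rfl hcard2, Finset.sum_const, smul_eq_mul, mul_comm]
    · intro e heM f hfM hne
      refine Finset.disjoint_left.mpr ?_
      intro v hv hv'
      exact hdisj e heM f hfM hne v ⟨(Finset.mem_filter.mp hv).2, (Finset.mem_filter.mp hv').2⟩
  -- every matched vertex has a neighbor in W (its partner)
  have hpartner : ∀ v ∈ W, 1 ≤ (W.filter (fun w => G.Adj v w)).card := by
    intro v hv
    obtain ⟨e, heM, hve⟩ := (hmemW v).mp hv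
    induction e with
    | h a b =>
      have hadj : G.Adj a b := (SimpleGraph.mem_edgeSet G).mp (hedge _ heM)
      rcases Sym2.mem_iff.mp hve with rfl | rfl
      · have : b ∈ W.filter (fun w => G.Adj v w) :=
          Finset.mem_filter.mpr ⟨(hmemW b).mpr ⟨_, heM, by simp⟩, hadj⟩
        exact Finset.card_pos.mpr ⟨b, this⟩
      · have : a ∈ W.filter (fun w => G.Adj v w) :=
          Finset.mem_filter.mpr ⟨(hmemW a).mpr ⟨_, heM, by simp⟩, hadj.symm⟩
        exact Finset.card_pos.mpr ⟨a, this⟩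
  -- degree split
  have hdeg : ∀ v : V, G.degree v =
      (W.filter (fun w => G.Adj v w)).card + (Wᶜ.filter (fun w => G.Adj v w)).card := by
    intro v
    rw [← SimpleGraph.card_neighborFinset_eq_degree]
    have : G.neighborFinset v = Finset.univ.filter (fun w => G.Adj v w) := by
      ext w; simp [SimpleGraph.mem_neighborFinset]
    rw [this, ← Finset.union_compl W, Finset.filter_union,
      Finset.card_union_of_disjoint (Finset.disjoint_filter_filter (disjoint_compl_right))]
  -- double counting
  have hdc : ∑ u ∈ Wᶜ, (W.filter (fun w => G.Adj u w)).card
      = ∑ v ∈ W, (Wᶜ.filter (fun w => G.Adj v w)).card := by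
    simp only [Finset.card_filter]
    rw [Finset.sum_comm]
    apply Finset.sum_congr rfl
    intro v _
    apply Finset.sum_congr rfl
    intro u _
    simp [G.adj_comm]
  -- unmatched degrees: no neighbors in Wᶜ
  have hUdeg : ∀ u ∈ Wᶜ, G.degree u = (W.filter (fun w => G.Adj u w)).card := by
    intro u hu
    rw [hdeg u]
    have : (Wᶜ.filter (fun w => G.Adj u w)) = ∅ := by
      apply Finset.filter_false_of_mem
      intro w hw
      exact hind u hu w hw
    rw [this, Finset.card_empty, add_zero]
  calc ∑ u ∈ Wᶜ, G.degree u + 2 * M.card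
      = ∑ u ∈ Wᶜ, (W.filter (fun w => G.Adj u w)).card + 2 * M.card :=
        by rw [Finset.sum_congr rfl hUdeg]
    _ = ∑ v ∈ W, (Wᶜ.filter (fun w => G.Adj v w)).card + ∑ v ∈ W, 1 := by
        rw [hdc, Finset.sum_const, smul_eq_mul, mul_one, hWcard]
    _ = ∑ v ∈ W, ((Wᶜ.filter (fun w => G.Adj v w)).card + 1) := by
        rw [Finset.sum_add_distrib]
    _ ≤ ∑ v ∈ W, G.degree v := by
        apply Finset.sum_le_sum
        intro v hv
        rw [hdeg v]
        have := hpartner v hv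
        omega
end

section
/- For any maximal matching M in a graph G with no isolated vertices, the sum of degrees of matched vertices is at least m(G) + |M|, where m(G) is the number of edges of G. -/
open scoped Classical

lemma mem_matchedSet {V : Type*} [Fintype V] {M : Finset (Sym2 V)} {v : V} :
    v ∈ matchedSet M ↔ ∃ e ∈ M, v ∈ e := by
  simp [matchedSet]

/-- every edge of G has a matched endpoint -/
lemma cover_aux {V : Type*} [Fintype V] (G : SimpleGraph V)
    (M : Finset (Sym2 V)) (hM : IsMaximalMatchingSet G M)
    {e : Sym2 V} (he : e ∈ G.edgeSet) : ∃ v ∈ e, v ∈ matchedSet M := by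
  by_cases heM : e ∈ M
  · induction e using Sym2.ind with
    | _ a b =>
      exact ⟨a, Sym2.mem_mk_left a b,
        mem_matchedSet.mpr ⟨_, heM, Sym2.mem_mk_left a b⟩⟩
  · by_contra h
    push_neg at h
    apply hM.2 e he heM
    refine ⟨?_, ?_⟩
    · intro f hf
      rcases Finset.mem_insert.mp hf with rfl | hf
      · exact he
      · exact hM.1.1 f hf
    · intro f hf g hg hfg v hv
      rcases Finset.mem_insert.mp hf with rfl | hf'
      · rcases Finset.mem_insert.mp hg with rfl | hg'
        · exact hfg rfl
        · exact h v hv.1 (mem_matchedSet.mpr ⟨g, hg', hv.2⟩)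
      · rcases Finset.mem_insert.mp hg with rfl | hg'
        · exact h v hv.2 (mem_matchedSet.mpr ⟨f, hf', hv.1⟩)
        · exact hM.1.2 f hf' g hg' hfg v hv

/-- For any maximal matching `M` in a graph `G` with no isolated vertices,
the sum of degrees of matched vertices is at least `m(G) + |M|`. -/
theorem sum_deg_matched_ge_edges_add_card
    {V : Type*} [Fintype V] (G : SimpleGraph V)
    (hiso : ∀ v : V, 0 < G.degree v)
    (M : Finset (Sym2 V)) (hM : IsMaximalMatchingSet G M) :
    G.edgeFinset.card + M.card ≤ ∑ v ∈ matchedSet M, G.degree v := by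
  classical
  set S := matchedSet M with hS
  have hsum : ∑ v ∈ S, G.degree v = ∑ e ∈ G.edgeFinset, (S.filter (fun v => v ∈ e)).card := by
    have : ∀ v, G.degree v = (G.edgeFinset.filter (fun e => v ∈ e)).card := by
      intro v
      rw [← SimpleGraph.card_incidenceFinset_eq_degree, SimpleGraph.incidenceFinset_eq_filter]
    simp_rw [this, Finset.card_filter]
    rw [Finset.sum_comm]
  have hsub : M ⊆ G.edgeFinset := fun e he =>
    SimpleGraph.mem_edgeFinset.mpr (hM.1.1 e he)
  have h1 : ∀ e ∈ G.edgeFinset, 1 ≤ (S.filter (fun v => v ∈ e)).card := by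
    intro e he
    obtain ⟨v, hv, hvS⟩ := cover_aux G M hM (SimpleGraph.mem_edgeFinset.mp he)
    exact Finset.card_pos.mpr ⟨v, Finset.mem_filter.mpr ⟨hvS, hv⟩⟩
  have h2 : ∀ e ∈ M, 2 ≤ (S.filter (fun v => v ∈ e)).card := by
    intro e heM
    have he : e ∈ G.edgeSet := hM.1.1 e heM
    revert heM he
    induction e using Sym2.ind with
    | _ a b =>
      intro heM he
      have hab : a ≠ b := (G.mem_edgeSet.mp he).ne
      have hsubset : ({a, b} : Finset V) ⊆ S.filter (fun v => v ∈ s(a, b)) := by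
        intro x hx
        rcases Finset.mem_insert.mp hx with rfl | hx
        · exact Finset.mem_filter.mpr ⟨mem_matchedSet.mpr ⟨_, heM, Sym2.mem_mk_left _ _⟩,
            Sym2.mem_mk_left _ _⟩
        · rw [Finset.mem_singleton] at hx; subst hx
          exact Finset.mem_filter.mpr ⟨mem_matchedSet.mpr ⟨_, heM, Sym2.mem_mk_right _ _⟩,
            Sym2.mem_mk_right _ _⟩
      calc 2 = ({a, b} : Finset V).card := (Finset.card_pair hab).symm
        _ ≤ _ := Finset.card_le_card hsubset
  rw [hsum, ← Finset.sum_sdiff hsub]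
  have hA : (G.edgeFinset \ M).card ≤ ∑ e ∈ G.edgeFinset \ M, (S.filter (fun v => v ∈ e)).card := by
    rw [Finset.card_eq_sum_ones]
    exact Finset.sum_le_sum fun e he => h1 e (Finset.mem_sdiff.mp he).1
  have hB : 2 * M.card ≤ ∑ e ∈ M, (S.filter (fun v => v ∈ e)).card := by
    calc 2 * M.card = ∑ _e ∈ M, 2 := by rw [Finset.sum_const, smul_eq_mul, mul_comm]
      _ ≤ _ := Finset.sum_le_sum h2
  have hcard : G.edgeFinset.card = (G.edgeFinset \ M).card + M.card :=
    (Finset.card_sdiff_add_card_eq_card hsub).symm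
  omega
end

section
/- For any maximal matching M of a graph G with no isolated vertices, |M| ≥ m(G) / (2Δ(G) − 1), where m(G) is the number of edges and Δ(G) is the maximum degree. -/
open scoped Classical

/-- For any maximal matching `M` of a graph `G` with no isolated vertices and
at least one edge, `|M| ≥ m(G) / (2Δ(G) − 1)`. -/
theorem maximal_matching_ge_edges_div
    {V : Type*} [Fintype V] (G : SimpleGraph V)
    (hiso : ∀ v : V, 0 < G.degree v) (he : G.edgeFinset.Nonempty)
    (M : Finset (Sym2 V)) (hM : IsMaximalMatchingSet G M) :
    (G.edgeFinset.card : ℚ) / (2 * G.maxDegree - 1) ≤ M.card := by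
  classical
  obtain ⟨hMmatch, hMmax⟩ := hM
  -- every edge of G meets some edge of M
  have key : ∀ e ∈ G.edgeFinset, ∃ f ∈ M, ∃ v, v ∈ e ∧ v ∈ f := by
    intro e heG
    rw [SimpleGraph.mem_edgeFinset] at heG
    by_cases heM : e ∈ M
    · exact ⟨e, heM, e.out.1, Sym2.out_fst_mem e, Sym2.out_fst_mem e⟩
    · have h2 := hMmax e heG heM
      have h1 : ∀ f ∈ insert e M, f ∈ G.edgeSet := by
        intro f hf
        rcases Finset.mem_insert.1 hf with rfl | hf
        · exact heG
        · exact hMmatch.1 f hf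
      simp only [IsMatchingSet, not_and] at h2
      have h4 := h2 h1
      push_neg at h4
      obtain ⟨a, ha, b, hb, hab, v, hva, hvb⟩ := h4
      rcases Finset.mem_insert.1 ha with rfl | haM
      · rcases Finset.mem_insert.1 hb with rfl | hbM
        · exact absurd rfl hab
        · exact ⟨b, hbM, v, hva, hvb⟩
      · rcases Finset.mem_insert.1 hb with rfl | hbM
        · exact ⟨a, haM, v, hvb, hva⟩
        · exact absurd ⟨hva, hvb⟩ (hMmatch.2 a haM b hbM hab v)
  have cover : G.edgeFinset ⊆
      M.biUnion (fun f => G.edgeFinset.filter (fun e => ∃ v, v ∈ e ∧ v ∈ f)) := by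
    intro e he'
    obtain ⟨f, hf, v, hv⟩ := key e he'
    exact Finset.mem_biUnion.2 ⟨f, hf, Finset.mem_filter.2 ⟨he', v, hv⟩⟩
  have hΔ : ∀ f ∈ M,
      (G.edgeFinset.filter (fun e => ∃ v, v ∈ e ∧ v ∈ f)).card ≤ 2 * G.maxDegree - 1 := by
    intro f hf
    induction f using Sym2.ind with
    | _ u w =>
      have hfE : s(u, w) ∈ G.edgeSet := hMmatch.1 _ hf
      have hsub : (G.edgeFinset.filter (fun e => ∃ v, v ∈ e ∧ v ∈ s(u, w))) ⊆
          G.incidenceFinset u ∪ G.incidenceFinset w := by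
        intro e he'
        simp only [Finset.mem_filter] at he'
        obtain ⟨heE, v, hv1, hv2⟩ := he'
        rw [Sym2.mem_iff] at hv2
        rcases hv2 with rfl | rfl
        · exact Finset.mem_union_left _
            ((G.mem_incidenceFinset _ _).2 ⟨SimpleGraph.mem_edgeFinset.1 heE, hv1⟩)
        · exact Finset.mem_union_right _
            ((G.mem_incidenceFinset _ _).2 ⟨SimpleGraph.mem_edgeFinset.1 heE, hv1⟩)
      have hmem : s(u, w) ∈ G.incidenceFinset u ∩ G.incidenceFinset w := by
        rw [Finset.mem_inter, G.mem_incidenceFinset, G.mem_incidenceFinset]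
        exact ⟨⟨hfE, Sym2.mem_mk_left u w⟩, ⟨hfE, Sym2.mem_mk_right u w⟩⟩
      have hinter : 1 ≤ (G.incidenceFinset u ∩ G.incidenceFinset w).card :=
        Finset.card_pos.2 ⟨_, hmem⟩
      have hsum := Finset.card_union_add_card_inter (G.incidenceFinset u) (G.incidenceFinset w)
      have hdu : G.degree u ≤ G.maxDegree := G.degree_le_maxDegree u
      have hdw : G.degree w ≤ G.maxDegree := G.degree_le_maxDegree w
      have hcu : (G.incidenceFinset u).card = G.degree u := G.card_incidenceFinset_eq_degree u
      have hcw : (G.incidenceFinset w).card = G.degree w := G.card_incidenceFinset_eq_degree w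
      have := Finset.card_le_card hsub
      omega
  have hcount : G.edgeFinset.card ≤ M.card * (2 * G.maxDegree - 1) := by
    calc G.edgeFinset.card
        ≤ (M.biUnion (fun f => G.edgeFinset.filter (fun e => ∃ v, v ∈ e ∧ v ∈ f))).card :=
          Finset.card_le_card cover
      _ ≤ ∑ f ∈ M, (G.edgeFinset.filter (fun e => ∃ v, v ∈ e ∧ v ∈ f)).card :=
          Finset.card_biUnion_le
      _ ≤ ∑ _f ∈ M, (2 * G.maxDegree - 1) := Finset.sum_le_sum hΔ
      _ = M.card * (2 * G.maxDegree - 1) := by rw [Finset.sum_const, smul_eq_mul]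
  have hΔ1 : 1 ≤ G.maxDegree := by
    obtain ⟨e, heG⟩ := he
    exact le_trans (hiso e.out.1) (G.degree_le_maxDegree e.out.1)
  have hpos : (0 : ℚ) < 2 * G.maxDegree - 1 := by
    have h1 : (1 : ℚ) ≤ (G.maxDegree : ℚ) := by exact_mod_cast hΔ1
    linarith
  rw [div_le_iff₀ hpos]
  have h2 : (G.edgeFinset.card : ℚ) ≤ ((M.card * (2 * G.maxDegree - 1) : ℕ) : ℚ) := by
    exact_mod_cast hcount
  have hcast : ((M.card * (2 * G.maxDegree - 1) : ℕ) : ℚ)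
      = M.card * (2 * G.maxDegree - 1) := by
    push_cast [Nat.cast_sub (by omega : 1 ≤ 2 * G.maxDegree)]
    ring
  rw [hcast] at h2
  exact h2
end

section
/- Let G be a graph without isolated vertices whose degree sequence d_1 ≥ d_2 ≥ ... ≥ d_n is arranged in non-increasing order. Then every maximal matching M of G satisfies |M| ≥ k*, where k* is the least natural number k such that d_1 + ... + d_{2k} − m(G) − k ≥ 0. -/
open scoped Classical

private lemma sum_antitone_le_range {D : ℕ → ℕ} (hD : Antitone D) :
    ∀ (c : ℕ) (s : Finset ℕ), s.card ≤ c → ∑ j ∈ s, D j ≤ ∑ j ∈ Finset.range c, D j := by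
  intro c
  induction c with
  | zero =>
    intro s hs
    simp [Finset.card_eq_zero.mp (Nat.le_zero.mp hs)]
  | succ c ih =>
    intro s hs
    rcases s.eq_empty_or_nonempty with rfl | hne
    · simp
    · set a := s.max' hne with ha_def
      by_cases hac : a < c + 1
      · apply Finset.sum_le_sum_of_subset
        intro x hx
        exact Finset.mem_range.mpr (lt_of_le_of_lt (Finset.le_max' s x hx) hac)
      · have ha : a ∈ s := s.max'_mem hne
        have hcard : (s.erase a).card ≤ c := by
          have := Finset.card_erase_of_mem ha
          have := Finset.card_pos.mpr hne
          omega
        have h1 := ih (s.erase a) hcard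
        have h2 : D a ≤ D c := hD (by omega)
        calc ∑ j ∈ s, D j = D a + ∑ j ∈ s.erase a, D j := (Finset.add_sum_erase _ _ ha).symm
          _ ≤ D c + ∑ j ∈ Finset.range c, D j := by omega
          _ = ∑ j ∈ Finset.range (c+1), D j := by rw [Finset.sum_range_succ]; ring

private lemma sum_fin_le {n : ℕ} {d : Fin n → ℕ} (hd : Antitone d) (c : ℕ)
    (s : Finset (Fin n)) (hs : s.card ≤ c) :
    ∑ i ∈ s, d i ≤ ∑ i ∈ Finset.univ.filter (fun i : Fin n => (i : ℕ) < c), d i := by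
  classical
  set D : ℕ → ℕ := fun j => if h : j < n then d ⟨j, h⟩ else 0 with hD_def
  have hDanti : Antitone D := by
    intro a b hab
    simp only [hD_def]
    split_ifs with hb ha ha
    · exact hd (show (⟨a, ha⟩ : Fin n) ≤ ⟨b, hb⟩ from hab)
    · exact absurd (lt_of_le_of_lt hab hb) ha
    · exact Nat.zero_le _
    · exact le_refl 0
  have hval : ∀ (t : Finset (Fin n)), ∑ i ∈ t, d i = ∑ j ∈ t.image Fin.val, D j := by
    intro t
    rw [Finset.sum_image (fun x _ y _ h => Fin.val_injective h)]
    apply Finset.sum_congr rfl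
    intro i _
    simp [hD_def, i.isLt]
  have key : ∑ j ∈ s.image Fin.val, D j ≤ ∑ j ∈ Finset.range c, D j := by
    apply sum_antitone_le_range hDanti
    calc (s.image Fin.val).card ≤ s.card := Finset.card_image_le
      _ ≤ c := hs
  have himg : (Finset.univ.filter (fun i : Fin n => (i : ℕ) < c)).image Fin.val
      = (Finset.range c).filter (· < n) := by
    ext j
    simp only [Finset.mem_image, Finset.mem_filter, Finset.mem_univ, true_and,
      Finset.mem_range]
    constructor
    · rintro ⟨i, hi, rfl⟩; exact ⟨hi, i.isLt⟩
    · rintro ⟨hjc, hjn⟩; exact ⟨⟨j, hjn⟩, hjc, rfl⟩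
  have hrhs : ∑ j ∈ Finset.range c, D j
      = ∑ i ∈ Finset.univ.filter (fun i : Fin n => (i : ℕ) < c), d i := by
    rw [hval, himg]
    symm
    apply Finset.sum_subset (Finset.filter_subset _ _)
    intro j hj hj'
    simp only [Finset.mem_filter, Finset.mem_range] at hj hj'
    have : ¬ j < n := fun h => hj' ⟨hj, h⟩
    simp [hD_def, this]
  calc ∑ i ∈ s, d i = ∑ j ∈ s.image Fin.val, D j := hval s
    _ ≤ ∑ j ∈ Finset.range c, D j := key
    _ = _ := hrhs

/-- Maximality-bound: every maximal matching `M` of a graph `G` without isolated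
vertices, with arranged degree sequence `d`, satisfies `|M| ≥ k*`, where `k*` is
the least `k` with `d₁ + ⋯ + d_{2k} − m(G) − k ≥ 0`. -/
theorem maximal_matching_ge_kstar
    {V : Type*} [Fintype V] {n : ℕ} (G : SimpleGraph V)
    (hiso : ∀ v : V, 0 < G.degree v)
    (d : Fin n → ℕ) (hd : Antitone d)
    (σ : Fin n ≃ V) (hσ : ∀ i, G.degree (σ i) = d i)
    (M : Finset (Sym2 V)) (hM : IsMaximalMatchingSet G M) :
    sInf {k : ℕ | G.edgeFinset.card + k ≤
        ∑ i ∈ Finset.univ.filter (fun i : Fin n => (i : ℕ) < 2 * k), d i} ≤ M.card := by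
  classical
  obtain ⟨⟨hMedge, hMdisj⟩, hMmax⟩ := hM
  set T : Finset V := matchedSet M with hT_def
  have hmemT : ∀ v : V, v ∈ T ↔ ∃ e ∈ M, v ∈ e := by
    intro v; simp [hT_def, matchedSet]
  -- each edge of M is a non-diagonal
  have hMsub : M ⊆ G.edgeFinset := fun e he =>
    SimpleGraph.mem_edgeFinset.mpr (hMedge e he)
  -- |T| ≤ 2 |M|
  have hTcard : T.card ≤ 2 * M.card := by
    have hsub : T ⊆ M.biUnion (fun e => Finset.univ.filter (· ∈ e)) := by
      intro v hv
      obtain ⟨e, he, hve⟩ := (hmemT v).mp hv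
      exact Finset.mem_biUnion.mpr ⟨e, he, by simp [hve]⟩
    calc T.card ≤ (M.biUnion (fun e => Finset.univ.filter (· ∈ e))).card :=
          Finset.card_le_card hsub
      _ ≤ ∑ e ∈ M, (Finset.univ.filter (· ∈ e)).card := Finset.card_biUnion_le
      _ ≤ ∑ _e ∈ M, 2 := by
          apply Finset.sum_le_sum
          intro e _
          induction e using Sym2.ind with
          | _ a b =>
            have : (Finset.univ.filter (· ∈ s(a, b))) = {a, b} := by
              ext v; simp [Sym2.mem_iff]
            rw [this]
            exact (Finset.card_insert_le _ _).trans (by simp)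
      _ = 2 * M.card := by rw [Finset.sum_const, smul_eq_mul, mul_comm]
  -- every edge meets T, matching edges meet it twice
  have hmeets : ∀ e ∈ G.edgeFinset,
      (if e ∈ M then 2 else 1) ≤ (T.filter (· ∈ e)).card := by
    intro e he
    by_cases heM : e ∈ M
    · simp only [heM, if_true]
      induction e using Sym2.ind with
      | _ a b =>
        have hab : a ≠ b := ((SimpleGraph.mem_edgeSet G).mp (hMedge _ heM)).ne
        have haT : a ∈ T := (hmemT a).mpr ⟨_, heM, by simp⟩
        have hbT : b ∈ T := (hmemT b).mpr ⟨_, heM, by simp⟩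
        have hsub : ({a, b} : Finset V) ⊆ T.filter (· ∈ s(a, b)) := by
          intro v hv
          rcases Finset.mem_insert.mp hv with rfl | hv
          · simp [haT]
          · simp only [Finset.mem_singleton] at hv; subst hv; simp [hbT]
        calc 2 = ({a, b} : Finset V).card := by rw [Finset.card_insert_of_notMem (by simp [hab]), Finset.card_singleton]
          _ ≤ _ := Finset.card_le_card hsub
    · simp only [heM, if_false]
      -- maximality: inserting e fails to be a matching
      have hnot := hMmax e (SimpleGraph.mem_edgeFinset.mp he) heM
      rw [IsMatchingSet, not_and_or] at hnot
      rcases hnot with h1 | h2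
      · exfalso
        apply h1
        intro f hf
        rcases Finset.mem_insert.mp hf with rfl | hf
        · exact SimpleGraph.mem_edgeFinset.mp he
        · exact hMedge f hf
      · push_neg at h2
        obtain ⟨e1, he1, e2, he2, hne, v, hv1, hv2⟩ := h2
        rcases Finset.mem_insert.mp he1 with rfl | he1'
        · -- e1 = e, so e2 ∈ M (since e2 ≠ e and e ∉ M, e2 ∈ M)
          have he2M : e2 ∈ M := by
            rcases Finset.mem_insert.mp he2 with rfl | h
            · exact absurd rfl hne
            · exact h
          have hvT : v ∈ T := (hmemT v).mpr ⟨e2, he2M, hv2⟩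
          rw [Nat.succ_le_iff, Finset.card_pos]
          exact ⟨v, Finset.mem_filter.mpr ⟨hvT, hv1⟩⟩
        · rcases Finset.mem_insert.mp he2 with rfl | he2'
          · have hvT : v ∈ T := (hmemT v).mpr ⟨e1, he1', hv1⟩
            rw [Nat.succ_le_iff, Finset.card_pos]
            exact ⟨v, Finset.mem_filter.mpr ⟨hvT, hv2⟩⟩
          · exact absurd ⟨hv1, hv2⟩ (hMdisj e1 he1' e2 he2' hne v)
  -- double counting
  have hdouble : ∑ v ∈ T, G.degree v = ∑ e ∈ G.edgeFinset, (T.filter (· ∈ e)).card := by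
    have : ∀ v ∈ T, G.degree v = ∑ e ∈ G.edgeFinset, (if v ∈ e then 1 else 0) := by
      intro v _
      rw [← SimpleGraph.card_incidenceFinset_eq_degree, G.incidenceFinset_eq_filter,
        Finset.card_filter]
    rw [Finset.sum_congr rfl this, Finset.sum_comm]
    apply Finset.sum_congr rfl
    intro e _
    rw [Finset.card_filter]
  -- lower bound for edge-count sum
  have hlower : G.edgeFinset.card + M.card ≤ ∑ e ∈ G.edgeFinset, (T.filter (· ∈ e)).card := by
    have h1 : ∑ e ∈ G.edgeFinset, (if e ∈ M then 2 else 1)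
        ≤ ∑ e ∈ G.edgeFinset, (T.filter (· ∈ e)).card :=
      Finset.sum_le_sum hmeets
    have h2 : ∑ e ∈ G.edgeFinset, (if e ∈ M then 2 else 1)
        = G.edgeFinset.card + M.card := by
      have hsplit : ∀ e ∈ G.edgeFinset,
          (if e ∈ M then 2 else 1) = 1 + (if e ∈ M then 1 else 0) := by
        intro e _; split_ifs <;> rfl
      rw [Finset.sum_congr rfl hsplit, Finset.sum_add_distrib, Finset.sum_const,
        ← Finset.card_filter, Finset.filter_mem_eq_inter,
        Finset.inter_eq_right.mpr hMsub, smul_eq_mul, mul_one]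
    omega
  -- degrees on T vs top degrees
  have htop : ∑ v ∈ T, G.degree v ≤
      ∑ i ∈ Finset.univ.filter (fun i : Fin n => (i : ℕ) < 2 * M.card), d i := by
    have heq : ∑ v ∈ T, G.degree v = ∑ i ∈ T.map σ.symm.toEmbedding, d i := by
      rw [Finset.sum_map]
      apply Finset.sum_congr rfl
      intro v _
      show G.degree v = d (σ.symm v)
      rw [← hσ (σ.symm v), Equiv.apply_symm_apply]
    rw [heq]
    apply sum_fin_le hd
    rw [Finset.card_map]
    exact hTcard
  apply Nat.sInf_le
  simp only [Set.mem_setOf_eq]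
  omega
end

section
/- For every ℓ-regular graph G on n vertices with ℓ ≥ 1, the matching number satisfies ν(G) ≥ (1/2)·(ℓ/(2ℓ−1))·n. -/
open scoped Classical

/-- For every `ℓ`-regular graph `G` on `n` vertices with `ℓ ≥ 1`,
`ν(G) ≥ (1/2)·(ℓ/(2ℓ−1))·n`. -/
theorem regular_matching_bound
    {V : Type*} [Fintype V] (G : SimpleGraph V) (ℓ : ℕ) (hℓ : 1 ≤ ℓ)
    (hreg : G.IsRegularOfDegree ℓ) :
    ∃ M : Finset (Sym2 V), IsMatchingSet G M ∧
      (1 / 2 : ℚ) * ((ℓ : ℚ) / (2 * (ℓ : ℚ) - 1)) * (Fintype.card V) ≤ M.card := by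
  classical
  -- choose a matching of maximum cardinality
  set 𝓜 : Finset (Finset (Sym2 V)) :=
    G.edgeFinset.powerset.filter (fun M => IsMatchingSet G M) with h𝓜
  have hne : 𝓜.Nonempty := by
    refine ⟨∅, ?_⟩
    simp [h𝓜, IsMatchingSet]
  obtain ⟨M, hMmem, hmax⟩ := 𝓜.exists_max_image Finset.card hne
  rw [h𝓜, Finset.mem_filter, Finset.mem_powerset] at hMmem
  obtain ⟨hMsub, hMmatch⟩ := hMmem
  refine ⟨M, hMmatch, ?_⟩
  obtain ⟨hMedge, hMdisj⟩ := hMmatch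
  -- every edge of G has a matched endpoint
  have hcover : ∀ e ∈ G.edgeSet, ∃ v, v ∈ e ∧ v ∈ matchedSet M := by
    intro e he
    by_cases heM : e ∈ M
    · exact ⟨e.out.1, e.out_fst_mem, by simp [matchedSet]; exact ⟨e, heM, e.out_fst_mem⟩⟩
    · by_contra hcon
      push_neg at hcon
      have hins : IsMatchingSet G (insert e M) := by
        constructor
        · intro f hf
          rcases Finset.mem_insert.mp hf with rfl | hf
          · exact he
          · exact hMedge f hf
        · intro f hf g hg hfg v hv
          by_cases hfM : f ∈ M <;> by_cases hgM : g ∈ M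
          · exact hMdisj f hfM g hgM hfg v hv
          · have hge : g = e := (Finset.mem_insert.mp hg).resolve_right hgM
            exact hcon v (hge ▸ hv.2) (by simp [matchedSet]; exact ⟨f, hfM, hv.1⟩)
          · have hfe : f = e := (Finset.mem_insert.mp hf).resolve_right hfM
            exact hcon v (hfe ▸ hv.1) (by simp [matchedSet]; exact ⟨g, hgM, hv.2⟩)
          · have hfe : f = e := (Finset.mem_insert.mp hf).resolve_right hfM
            have hge : g = e := (Finset.mem_insert.mp hg).resolve_right hgM
            exact hfg (hfe.trans hge.symm)
      have hmem : insert e M ∈ 𝓜 := by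
        rw [h𝓜, Finset.mem_filter, Finset.mem_powerset]
        refine ⟨Finset.insert_subset (by rwa [SimpleGraph.mem_edgeFinset]) hMsub, hins⟩
      have := hmax _ hmem
      rw [Finset.card_insert_of_notMem heM] at this
      omega
  -- the matched set has at most 2|M| vertices
  have hS2 : (matchedSet M).card ≤ 2 * M.card := by
    have hsub : matchedSet M ⊆ M.biUnion (fun e => Finset.univ.filter (· ∈ e)) := by
      intro v hv
      simp only [matchedSet, Finset.mem_filter, Finset.mem_univ, true_and] at hv
      obtain ⟨e, he, hve⟩ := hv
      exact Finset.mem_biUnion.mpr ⟨e, he, by simp [hve]⟩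
    calc (matchedSet M).card ≤ _ := Finset.card_le_card hsub
      _ ≤ ∑ e ∈ M, (Finset.univ.filter (· ∈ e)).card := Finset.card_biUnion_le
      _ ≤ ∑ e ∈ M, 2 := by
        refine Finset.sum_le_sum fun e he => ?_
        induction e with
        | h a b =>
          have : (Finset.univ.filter (· ∈ s(a, b))) ⊆ {a, b} := by
            intro v hv
            simp only [Finset.mem_filter, Sym2.mem_iff] at hv
            simp [hv.2]
          exact le_trans (Finset.card_le_card this) (Finset.card_insert_le _ _ |>.trans (by simp))
      _ = 2 * M.card := by rw [Finset.sum_const, smul_eq_mul, mul_comm]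
  -- counting edges: every non-matching edge is incident to a matched vertex,
  -- and each matched vertex is incident to at most ℓ - 1 non-matching edges
  set E' : Finset (Sym2 V) := G.edgeFinset \ M with hE'
  have hE'card : E'.card ≤ (matchedSet M).card * (ℓ - 1) := by
    have hsub : E' ⊆ (matchedSet M).biUnion (fun v => E'.filter (v ∈ ·)) := by
      intro e he
      have heG : e ∈ G.edgeSet := by
        rw [hE', Finset.mem_sdiff] at he
        exact SimpleGraph.mem_edgeFinset.mp he.1
      obtain ⟨v, hve, hvS⟩ := hcover e heG
      exact Finset.mem_biUnion.mpr ⟨v, hvS, Finset.mem_filter.mpr ⟨he, hve⟩⟩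
    calc E'.card ≤ _ := Finset.card_le_card hsub
      _ ≤ ∑ v ∈ matchedSet M, (E'.filter (v ∈ ·)).card := Finset.card_biUnion_le
      _ ≤ ∑ v ∈ matchedSet M, (ℓ - 1) := by
        refine Finset.sum_le_sum fun v hv => ?_
        simp only [matchedSet, Finset.mem_filter, Finset.mem_univ, true_and] at hv
        obtain ⟨m, hmM, hvm⟩ := hv
        have hsub2 : (E'.filter (v ∈ ·)) ⊆ G.incidenceFinset v \ {m} := by
          intro f hf
          rw [Finset.mem_filter] at hf
          rw [Finset.mem_sdiff, SimpleGraph.mem_incidenceFinset]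
          have hfE' := hf.1
          rw [hE', Finset.mem_sdiff] at hfE'
          refine ⟨⟨SimpleGraph.mem_edgeFinset.mp hfE'.1, hf.2⟩, ?_⟩
          simp only [Finset.mem_singleton]
          rintro rfl
          exact hfE'.2 hmM
        have hmInc : m ∈ G.incidenceFinset v :=
          (G.mem_incidenceFinset (v := v) m).mpr ⟨hMedge m hmM, hvm⟩
        calc (E'.filter (v ∈ ·)).card ≤ _ := Finset.card_le_card hsub2
          _ = (G.incidenceFinset v).card - 1 := by
            rw [Finset.card_sdiff_of_subset (Finset.singleton_subset_iff.mpr hmInc),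
              Finset.card_singleton]
          _ = ℓ - 1 := by rw [G.card_incidenceFinset_eq_degree, hreg v]
      _ = (matchedSet M).card * (ℓ - 1) := by rw [Finset.sum_const, smul_eq_mul]
  -- degree-sum formula
  have hdeg : Fintype.card V * ℓ = 2 * G.edgeFinset.card := by
    rw [← G.sum_degrees_eq_twice_card_edges]
    simp [hreg _, Finset.sum_const, mul_comm]
  have hedges : G.edgeFinset.card ≤ M.card + 2 * (M.card * (ℓ - 1)) := by
    have h0 : G.edgeFinset.card ≤ M.card + E'.card := by
      rw [hE']
      have := Finset.card_le_card_sdiff_add_card (s := G.edgeFinset) (t := M)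
      omega
    have h2 : E'.card ≤ 2 * (M.card * (ℓ - 1)) := by
      calc E'.card ≤ (matchedSet M).card * (ℓ - 1) := hE'card
        _ ≤ 2 * M.card * (ℓ - 1) := Nat.mul_le_mul_right _ hS2
        _ = 2 * (M.card * (ℓ - 1)) := by rw [mul_assoc]
    omega
  -- conclude in ℚ
  have h1 : Fintype.card V * ℓ ≤ 2 * M.card + 4 * (M.card * (ℓ - 1)) := by omega
  have hkey := (Nat.cast_le (α := ℚ)).mpr h1
  push_cast [Nat.cast_sub hℓ] at hkey
  have hpos : (0 : ℚ) < 2 * (ℓ : ℚ) - 1 := by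
    have : (1 : ℚ) ≤ (ℓ : ℚ) := by exact_mod_cast hℓ
    linarith
  rw [show (1 / 2 : ℚ) * ((ℓ : ℚ) / (2 * (ℓ : ℚ) - 1)) * (Fintype.card V) =
      ((ℓ : ℚ) * Fintype.card V / 2) / (2 * (ℓ : ℚ) - 1) by ring,
    div_le_iff₀ hpos]
  nlinarith [hkey]
end

section
/- Let M be a maximal matching in a graph G with no isolated vertices. Then for every subset U of the uncovered vertices U_M, we have Σ_{v ∈ V_M} min{d(v)−1, |U|} ≥ Σ_{u ∈ U} d(u). -/
open scoped Classical

/-- Gale–Ryser type bound for maximal matchings: for every subset `U` of the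
uncovered vertices, `Σ_{v ∈ V_M} min{d(v)−1, |U|} ≥ Σ_{u ∈ U} d(u)`. -/
theorem maximal_matching_gale_ryser
    {V : Type*} [Fintype V] (G : SimpleGraph V)
    (hiso : ∀ v : V, 0 < G.degree v)
    (M : Finset (Sym2 V)) (hM : IsMaximalMatchingSet G M) :
    ∀ U ⊆ (matchedSet M)ᶜ,
      ∑ u ∈ U, G.degree u ≤ ∑ v ∈ matchedSet M, min (G.degree v - 1) U.card := by
  intro U hU
  have hUun : ∀ u ∈ U, ∀ e ∈ M, u ∉ e := by
    intro u hu
    have := hU hu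
    simp only [Finset.mem_compl, matchedSet, Finset.mem_filter, Finset.mem_univ, true_and,
      not_exists] at this
    intro e he
    exact fun h => this e ⟨he, h⟩
  -- every neighbor of a vertex of U is matched
  have hnb : ∀ u ∈ U, ∀ w, G.Adj u w → w ∈ matchedSet M := by
    intro u hu w hadj
    by_contra hw
    simp only [matchedSet, Finset.mem_filter, Finset.mem_univ, true_and, not_exists] at hw
    have hne : s(u, w) ∉ M := fun h => hUun u hu _ h (by simp)
    refine hM.2 s(u, w) (G.mem_edgeSet.mpr hadj) hne ⟨?_, ?_⟩
    · intro e he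
      rcases Finset.mem_insert.mp he with rfl | he
      · exact G.mem_edgeSet.mpr hadj
      · exact hM.1.1 e he
    · intro e he f hf hef x hx
      rcases Finset.mem_insert.mp he with he' | he' <;>
        rcases Finset.mem_insert.mp hf with hf' | hf'
      · exact hef (he'.trans hf'.symm)
      · subst he'
        rcases Sym2.mem_iff.mp hx.1 with rfl | rfl
        · exact hUun _ hu f hf' hx.2
        · exact hw f ⟨hf', hx.2⟩
      · subst hf'
        rcases Sym2.mem_iff.mp hx.2 with rfl | rfl
        · exact hUun _ hu e he' hx.1
        · exact hw e ⟨he', hx.1⟩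
      · exact hM.1.2 e he' f hf' hef x hx
  -- rewrite degree of u as count of neighbors in matchedSet
  have hdeg : ∀ u ∈ U, G.degree u =
      ∑ v ∈ matchedSet M, (if G.Adj u v then 1 else 0) := by
    intro u hu
    rw [← Finset.sum_filter]
    have : (matchedSet M).filter (fun v => G.Adj u v) = G.neighborFinset u := by
      ext v
      simp only [Finset.mem_filter, SimpleGraph.mem_neighborFinset]
      exact ⟨fun h => h.2, fun h => ⟨hnb u hu v h, h⟩⟩
    rw [this, Finset.sum_const, smul_eq_mul, mul_one]
    rfl
  calc ∑ u ∈ U, G.degree u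
      = ∑ u ∈ U, ∑ v ∈ matchedSet M, (if G.Adj u v then 1 else 0) :=
        Finset.sum_congr rfl hdeg
    _ = ∑ v ∈ matchedSet M, ∑ u ∈ U, (if G.Adj u v then 1 else 0) := Finset.sum_comm
    _ ≤ ∑ v ∈ matchedSet M, min (G.degree v - 1) U.card := by
        refine Finset.sum_le_sum ?_
        intro v hv
        rw [← Finset.sum_filter, Finset.sum_const, smul_eq_mul, mul_one]
        -- get the matching partner w of v
        simp only [matchedSet, Finset.mem_filter, Finset.mem_univ, true_and] at hv
        obtain ⟨e, he, hve⟩ := hv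
        induction e using Sym2.ind with
        | _ a b =>
          have hab : G.Adj a b := G.mem_edgeSet.mp (hM.1.1 _ he)
          -- pick w = the other endpoint
          obtain ⟨w, hvw, hwe⟩ : ∃ w, G.Adj v w ∧ w ∈ (s(a, b) : Sym2 V) := by
            rcases Sym2.mem_iff.mp hve with rfl | rfl
            · exact ⟨b, hab, by simp⟩
            · exact ⟨a, hab.symm, by simp⟩
          have hwU : w ∉ U := fun h => hUun w h _ he hwe
          refine le_min ?_ (Finset.card_le_card (Finset.filter_subset _ _))
          have hsub : U.filter (fun u => G.Adj u v) ⊆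
              (G.neighborFinset v).erase w := by
            intro u hu
            simp only [Finset.mem_filter] at hu
            refine Finset.mem_erase.mpr ⟨?_, SimpleGraph.mem_neighborFinset _ _ _ |>.mpr hu.2.symm⟩
            rintro rfl; exact hwU hu.1
          calc (U.filter (fun u => G.Adj u v)).card
              ≤ ((G.neighborFinset v).erase w).card := Finset.card_le_card hsub
            _ = G.degree v - 1 := by
                rw [Finset.card_erase_of_mem ((SimpleGraph.mem_neighborFinset _ _ _).mpr hvw)]
                rfl
end

section
/- Let M be a maximum matching in a graph G, and let uv ∈ M. Then the number of edges of G between {u,v} and the set U_M of M-uncovered vertices is at most max{d(u)−1, d(v)−1, min{2, d(u)+d(v)−2}}. -/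
open scoped Classical

lemma aug_lemma {V : Type*} [Fintype V] [DecidableEq V] (G : SimpleGraph V)
    (M : Finset (Sym2 V)) (hM : IsMatchingSet G M)
    (hmax : ∀ M' : Finset (Sym2 V), IsMatchingSet G M' → M'.card ≤ M.card)
    (u v x y : V) (huv : s(u, v) ∈ M)
    (hx : G.Adj u x) (hy : G.Adj v y)
    (hxU : x ∉ matchedSet M) (hyU : y ∉ matchedSet M) : x = y := by
  by_contra hxy
  have hxe : ∀ e ∈ M, x ∉ e := by
    intro e he hxe
    exact hxU (by simp [matchedSet]; exact ⟨e, he, hxe⟩)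
  have hye : ∀ e ∈ M, y ∉ e := by
    intro e he hye
    exact hyU (by simp [matchedSet]; exact ⟨e, he, hye⟩)
  have huv' : u ≠ v := (hM.1 _ huv).ne
  have hxu : x ≠ u := fun h => hxe _ huv (by simp [h])
  have hxv : x ≠ v := fun h => hxe _ huv (by simp [h])
  have hyu : y ≠ u := fun h => hye _ huv (by simp [h])
  have hyv : y ≠ v := fun h => hye _ huv (by simp [h])
  have hue : ∀ e ∈ M.erase s(u, v), u ∉ e := by
    intro e he hue
    exact hM.2 e (Finset.mem_of_mem_erase he) s(u, v) huv (Finset.ne_of_mem_erase he) u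
      ⟨hue, by simp⟩
  have hve : ∀ e ∈ M.erase s(u, v), v ∉ e := by
    intro e he hve
    exact hM.2 e (Finset.mem_of_mem_erase he) s(u, v) huv (Finset.ne_of_mem_erase he) v
      ⟨hve, by simp⟩
  set M' : Finset (Sym2 V) := insert s(u, x) (insert s(v, y) (M.erase s(u, v))) with hM'
  have hmem : ∀ e ∈ M', e = s(u, x) ∨ e = s(v, y) ∨ e ∈ M.erase s(u, v) := by
    intro e he
    simpa [hM', Finset.mem_insert] using he
  have hmatch : IsMatchingSet G M' := by
    constructor
    · intro e he
      rcases hmem e he with h | h | h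
      · rw [h]; exact hx
      · rw [h]; exact hy
      · exact hM.1 _ (Finset.mem_of_mem_erase h)
    · intro e he f hf hef w ⟨hwe, hwf⟩
      rcases hmem e he with h1 | h1 | h1 <;> rcases hmem f hf with h2 | h2 | h2
      · exact hef (h1.trans h2.symm)
      · subst h1; subst h2
        rcases Sym2.mem_iff.1 hwe with rfl | rfl <;>
          rcases Sym2.mem_iff.1 hwf with h | h <;> simp_all
      · subst h1
        rcases Sym2.mem_iff.1 hwe with rfl | rfl
        · exact hue f h2 hwf
        · exact hxe f (Finset.mem_of_mem_erase h2) hwf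
      · subst h1; subst h2
        rcases Sym2.mem_iff.1 hwe with rfl | rfl <;>
          rcases Sym2.mem_iff.1 hwf with h | h <;> simp_all
      · exact hef (h1.trans h2.symm)
      · subst h1
        rcases Sym2.mem_iff.1 hwe with rfl | rfl
        · exact hve f h2 hwf
        · exact hye f (Finset.mem_of_mem_erase h2) hwf
      · subst h2
        rcases Sym2.mem_iff.1 hwf with rfl | rfl
        · exact hue e h1 hwe
        · exact hxe e (Finset.mem_of_mem_erase h1) hwe
      · subst h2
        rcases Sym2.mem_iff.1 hwf with rfl | rfl
        · exact hve e h1 hwe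
        · exact hye e (Finset.mem_of_mem_erase h1) hwe
      · exact hM.2 e (Finset.mem_of_mem_erase h1) f (Finset.mem_of_mem_erase h2) hef w ⟨hwe, hwf⟩
  have hvyM : s(v, y) ∉ M.erase s(u, v) := by
    intro h
    exact hye _ (Finset.mem_of_mem_erase h) (by simp)
  have huxM : s(u, x) ∉ insert s(v, y) (M.erase s(u, v)) := by
    intro h
    rcases Finset.mem_insert.1 h with h | h
    · rw [Sym2.eq_iff] at h
      rcases h with ⟨h, _⟩ | ⟨_, h⟩ <;> simp_all
    · exact hxe _ (Finset.mem_of_mem_erase h) (by simp)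
  have hcard : M'.card = M.card + 1 := by
    rw [hM', Finset.card_insert_of_notMem huxM, Finset.card_insert_of_notMem hvyM,
      Finset.card_erase_of_mem huv]
    have : 1 ≤ M.card := Finset.card_pos.2 ⟨_, huv⟩
    omega
  have := hmax M' hmatch
  omega

/-- If `M` is a maximum matching and `uv ∈ M`, then the number of edges of `G`
between `{u,v}` and the set of `M`-uncovered vertices is at most
`max{d(u)−1, d(v)−1, min{2, d(u)+d(v)−2}}`. -/
theorem maximum_matching_edge_bound
    {V : Type*} [Fintype V] [DecidableEq V] (G : SimpleGraph V)
    (M : Finset (Sym2 V)) (hM : IsMatchingSet G M)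
    (hmax : ∀ M' : Finset (Sym2 V), IsMatchingSet G M' → M'.card ≤ M.card)
    (u v : V) (huv : s(u, v) ∈ M) :
    (G.edgeFinset.filter (fun e =>
        ∃ a ∈ ({u, v} : Finset V), ∃ b ∈ (matchedSet M)ᶜ, e = s(a, b))).card ≤
      max (G.degree u - 1) (max (G.degree v - 1) (min 2 (G.degree u + G.degree v - 2))) := by
  have hadj : G.Adj u v := hM.1 _ huv
  have hne : u ≠ v := hadj.ne
  have huM : u ∈ matchedSet M := by simp [matchedSet]; exact ⟨_, huv, by simp⟩
  have hvM : v ∈ matchedSet M := by simp [matchedSet]; exact ⟨_, huv, by simp⟩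
  set U : Finset V := (matchedSet M)ᶜ with hU
  set A : Finset V := G.neighborFinset u ∩ U with hA
  set B : Finset V := G.neighborFinset v ∩ U with hB
  set S := G.edgeFinset.filter (fun e =>
      ∃ a ∈ ({u, v} : Finset V), ∃ b ∈ (matchedSet M)ᶜ, e = s(a, b)) with hS
  have hsub : S ⊆ A.image (fun b => s(u, b)) ∪ B.image (fun b => s(v, b)) := by
    intro e he
    rw [hS, Finset.mem_filter] at he
    obtain ⟨heE, a, ha, b, hb, rfl⟩ := he
    rw [SimpleGraph.mem_edgeFinset, SimpleGraph.mem_edgeSet] at heE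
    rcases Finset.mem_insert.1 ha with rfl | ha
    · exact Finset.mem_union_left _ (Finset.mem_image.2 ⟨b,
        Finset.mem_inter.2 ⟨(SimpleGraph.mem_neighborFinset ..).2 heE, hb⟩, rfl⟩)
    · rcases Finset.mem_singleton.1 ha with rfl
      exact Finset.mem_union_right _ (Finset.mem_image.2 ⟨b,
        Finset.mem_inter.2 ⟨(SimpleGraph.mem_neighborFinset ..).2 heE, hb⟩, rfl⟩)
  have hScard : S.card ≤ A.card + B.card := by
    calc S.card ≤ _ := Finset.card_le_card hsub
    _ ≤ (A.image (fun b => s(u, b))).card + (B.image (fun b => s(v, b))).card :=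
        Finset.card_union_le _ _
    _ ≤ A.card + B.card :=
        Nat.add_le_add (Finset.card_image_le) (Finset.card_image_le)
  have hAU : ∀ b ∈ A, G.Adj u b ∧ b ∉ matchedSet M := by
    intro b hb
    rw [hA, Finset.mem_inter, SimpleGraph.mem_neighborFinset, hU, Finset.mem_compl] at hb
    exact hb
  have hBU : ∀ b ∈ B, G.Adj v b ∧ b ∉ matchedSet M := by
    intro b hb
    rw [hB, Finset.mem_inter, SimpleGraph.mem_neighborFinset, hU, Finset.mem_compl] at hb
    exact hb
  rcases Finset.eq_empty_or_nonempty B with hBe | ⟨y, hy⟩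
  · -- all edges go to u; A ⊆ N(u) \ {v}
    have hAsub : A ⊆ (G.neighborFinset u).erase v := by
      intro b hb
      obtain ⟨h1, h2⟩ := hAU b hb
      exact Finset.mem_erase.2 ⟨fun h => h2 (h ▸ hvM), (SimpleGraph.mem_neighborFinset ..).2 h1⟩
    have : A.card ≤ G.degree u - 1 := by
      calc A.card ≤ ((G.neighborFinset u).erase v).card := Finset.card_le_card hAsub
      _ = G.degree u - 1 := by
          rw [Finset.card_erase_of_mem ((SimpleGraph.mem_neighborFinset ..).2 hadj),
            SimpleGraph.card_neighborFinset_eq_degree]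
    have : S.card ≤ G.degree u - 1 := by
      rw [hBe] at hScard; simpa using le_trans hScard this
    exact le_trans this (le_max_left _ _)
  rcases Finset.eq_empty_or_nonempty A with hAe | ⟨x, hx⟩
  · have hBsub : B ⊆ (G.neighborFinset v).erase u := by
      intro b hb
      obtain ⟨h1, h2⟩ := hBU b hb
      exact Finset.mem_erase.2 ⟨fun h => h2 (h ▸ huM), (SimpleGraph.mem_neighborFinset ..).2 h1⟩
    have : B.card ≤ G.degree v - 1 := by
      calc B.card ≤ ((G.neighborFinset v).erase u).card := Finset.card_le_card hBsub
      _ = G.degree v - 1 := by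
          rw [Finset.card_erase_of_mem ((SimpleGraph.mem_neighborFinset ..).2 hadj.symm),
            SimpleGraph.card_neighborFinset_eq_degree]
    have : S.card ≤ G.degree v - 1 := by
      rw [hAe] at hScard; simp only [Finset.card_empty, Nat.zero_add] at hScard; exact le_trans hScard this
    exact le_trans this (le_trans (le_max_left _ _) (le_max_right _ _))
  · -- both nonempty: A and B are both {y} basically
    obtain ⟨hxadj, hxU⟩ := hAU x hx
    obtain ⟨hyadj, hyU⟩ := hBU y hy
    have key : ∀ a ∈ A, ∀ b ∈ B, a = b := by
      intro a ha b hb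
      obtain ⟨h1, h2⟩ := hAU a ha
      obtain ⟨h3, h4⟩ := hBU b hb
      exact aug_lemma G M hM hmax u v a b huv h1 h3 h2 h4
    have hA1 : A.card ≤ 1 := Finset.card_le_one.2 fun a ha b hb =>
      (key a ha y hy).trans (key b hb y hy).symm
    have hB1 : B.card ≤ 1 := Finset.card_le_one.2 fun a ha b hb =>
      ((key x hx a ha).symm.trans (key x hx b hb))
    have hS2 : S.card ≤ 2 := le_trans hScard (by omega)
    have hxv : x ≠ v := fun h => hxU (h ▸ hvM)
    have hyu : y ≠ u := fun h => hyU (h ▸ huM)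
    have hdu : 2 ≤ G.degree u := by
      have : ({v, x} : Finset V) ⊆ G.neighborFinset u := by
        intro b hb
        rcases Finset.mem_insert.1 hb with rfl | hb
        · exact (SimpleGraph.mem_neighborFinset ..).2 hadj
        · rcases Finset.mem_singleton.1 hb with rfl
          exact (SimpleGraph.mem_neighborFinset ..).2 hxadj
      calc 2 = ({v, x} : Finset V).card := by rw [Finset.card_insert_of_notMem (by simp [Ne.symm hxv]), Finset.card_singleton]
      _ ≤ _ := Finset.card_le_card this
      _ = G.degree u := SimpleGraph.card_neighborFinset_eq_degree ..
    have hdv : 2 ≤ G.degree v := by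
      have : ({u, y} : Finset V) ⊆ G.neighborFinset v := by
        intro b hb
        rcases Finset.mem_insert.1 hb with rfl | hb
        · exact (SimpleGraph.mem_neighborFinset ..).2 hadj.symm
        · rcases Finset.mem_singleton.1 hb with rfl
          exact (SimpleGraph.mem_neighborFinset ..).2 hyadj
      calc 2 = ({u, y} : Finset V).card := by rw [Finset.card_insert_of_notMem (by simp [Ne.symm hyu]), Finset.card_singleton]
      _ ≤ _ := Finset.card_le_card this
      _ = G.degree v := SimpleGraph.card_neighborFinset_eq_degree ..
    have hmin : min 2 (G.degree u + G.degree v - 2) = 2 := by omega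
    omega
end

section
/- Let M be a maximum matching in a graph G. Then Σ_{uv ∈ M} max(d(u)−1, d(v)−1) + |{uv ∈ M : d(u) = d(v) = 2}| ≥ Σ_{w ∈ U_M} d(w). -/
open scoped Classical

section Aux
variable {V : Type*} [Fintype V] (G : SimpleGraph V)

lemma matching_subset {M S : Finset (Sym2 V)} (h : IsMatchingSet G M) (hs : S ⊆ M) :
    IsMatchingSet G S :=
  ⟨fun e he => h.1 e (hs he), fun e he f hf => h.2 e (hs he) f (hs hf)⟩

lemma matching_insert {S : Finset (Sym2 V)} (hS : IsMatchingSet G S) {e : Sym2 V}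
    (he : e ∈ G.edgeSet) (hdisj : ∀ f ∈ S, ∀ v : V, v ∈ e → v ∉ f) :
    IsMatchingSet G (insert e S) := by
  constructor
  · intro f hf
    rcases Finset.mem_insert.1 hf with rfl | hf
    · exact he
    · exact hS.1 f hf
  · intro f hf g hg hne v hv
    rcases Finset.mem_insert.1 hf with hfe | hf
    · rcases Finset.mem_insert.1 hg with hge | hg
      · exact hne (hfe.trans hge.symm)
      · exact hdisj g hg v (hfe ▸ hv.1) hv.2
    · rcases Finset.mem_insert.1 hg with hge | hg
      · exact hdisj f hf v (hge ▸ hv.2) hv.1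
      · exact hS.2 f hf g hg hne v hv

lemma notMem_edge_of_unmatched {M : Finset (Sym2 V)} {w : V}
    (hw : w ∉ matchedSet M) {e : Sym2 V} (he : e ∈ M) : w ∉ e := by
  intro hwe
  exact hw (Finset.mem_filter.2 ⟨Finset.mem_univ _, e, he, hwe⟩)

lemma mem_insert_card {S : Finset (Sym2 V)} {e : Sym2 V}
    (hdisj : ∀ f ∈ S, ∀ v : V, v ∈ e → v ∉ f) : e ∉ S := by
  intro heS
  induction e using Sym2.ind with
  | _ a b => exact hdisj _ heS a (Sym2.mem_mk_left a b) (Sym2.mem_mk_left a b)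


lemma nbr_matched {M : Finset (Sym2 V)} (hM : IsMatchingSet G M)
    (hmax : ∀ M' : Finset (Sym2 V), IsMatchingSet G M' → M'.card ≤ M.card)
    {w x : V} (hw : w ∉ matchedSet M) (hadj : G.Adj w x) : x ∈ matchedSet M := by
  by_contra hx
  have hdisj : ∀ f ∈ M, ∀ v : V, v ∈ s(w, x) → v ∉ f := by
    intro f hf v hv
    rcases Sym2.mem_iff.1 hv with rfl | rfl
    · exact notMem_edge_of_unmatched hw hf
    · exact notMem_edge_of_unmatched hx hf
  have hm' := matching_insert G hM (G.mem_edgeSet.2 hadj) hdisj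
  have hnot := mem_insert_card hdisj
  have := hmax _ hm'
  rw [Finset.card_insert_of_notMem hnot] at this
  omega

lemma aug {M : Finset (Sym2 V)} (hM : IsMatchingSet G M)
    (hmax : ∀ M' : Finset (Sym2 V), IsMatchingSet G M' → M'.card ≤ M.card)
    {u v w w' : V} (he : s(u, v) ∈ M)
    (hw : w ∉ matchedSet M) (hw' : w' ∉ matchedSet M)
    (hwu : G.Adj w u) (hw'v : G.Adj w' v) : w = w' := by
  by_contra hne
  have huM : u ∈ s(u, v) := Sym2.mem_mk_left u v
  have hvM : v ∈ s(u, v) := Sym2.mem_mk_right u v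
  have hwv : w ≠ v := fun h => notMem_edge_of_unmatched hw he (h ▸ hvM)
  have hwu' : w ≠ u := G.ne_of_adj hwu
  have hw'u : w' ≠ u := fun h => notMem_edge_of_unmatched hw' he (h ▸ huM)
  have hw'v' : w' ≠ v := G.ne_of_adj hw'v
  set S₀ := M.erase s(u, v) with hS₀
  have hS₀m : IsMatchingSet G S₀ := matching_subset G hM (Finset.erase_subset _ _)
  have hvert : ∀ f ∈ S₀, ∀ z : V, z ∈ s(u, v) → z ∉ f := by
    intro f hf z hz hzf
    exact hM.2 _ he f (Finset.mem_of_mem_erase hf) (Ne.symm (Finset.ne_of_mem_erase hf)) z ⟨hz, hzf⟩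
  have hdisj1 : ∀ f ∈ S₀, ∀ z : V, z ∈ s(w', v) → z ∉ f := by
    intro f hf z hz
    rcases Sym2.mem_iff.1 hz with rfl | rfl
    · exact notMem_edge_of_unmatched hw' (Finset.mem_of_mem_erase hf)
    · exact hvert f hf z hvM
  have hS₁m : IsMatchingSet G (insert s(w', v) S₀) :=
    matching_insert G hS₀m (G.mem_edgeSet.2 hw'v) hdisj1
  have hdisj2 : ∀ f ∈ insert s(w', v) S₀, ∀ z : V, z ∈ s(w, u) → z ∉ f := by
    intro f hf z hz hzf
    rcases Finset.mem_insert.1 hf with hfe | hf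
    · subst hfe
      rcases Sym2.mem_iff.1 hz with rfl | rfl
      · rcases Sym2.mem_iff.1 hzf with h | h
        · exact hne h
        · exact hwv h
      · rcases Sym2.mem_iff.1 hzf with h | h
        · exact hw'u h.symm
        · exact G.ne_of_adj (G.mem_edgeSet.1 (hM.1 _ he)) h
    · rcases Sym2.mem_iff.1 hz with rfl | rfl
      · exact notMem_edge_of_unmatched hw (Finset.mem_of_mem_erase hf) hzf
      · exact hvert f hf z huM hzf
  have hS₂m : IsMatchingSet G (insert s(w, u) (insert s(w', v) S₀)) :=
    matching_insert G hS₁m (G.mem_edgeSet.2 hwu) hdisj2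
  have hcard := hmax _ hS₂m
  rw [Finset.card_insert_of_notMem (mem_insert_card hdisj2),
    Finset.card_insert_of_notMem (mem_insert_card hdisj1),
    Finset.card_erase_of_mem he] at hcard
  have : 1 ≤ M.card := Finset.card_pos.2 ⟨_, he⟩
  omega


lemma deg_split {M : Finset (Sym2 V)} (hM : IsMatchingSet G M)
    (hmax : ∀ M' : Finset (Sym2 V), IsMatchingSet G M' → M'.card ≤ M.card)
    {w : V} (hw : w ∈ (matchedSet M)ᶜ) :
    G.degree w = ∑ e ∈ M, ((G.neighborFinset w).filter (fun x => x ∈ e)).card := by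
  have hw' : w ∉ matchedSet M := Finset.mem_compl.1 hw
  rw [← SimpleGraph.card_neighborFinset_eq_degree]
  set f : V → Sym2 V := fun x => if h : ∃ e ∈ M, x ∈ e then h.choose else s(x, x) with hf
  have hmem : ∀ x ∈ G.neighborFinset w, f x ∈ M ∧ x ∈ f x := by
    intro x hx
    have hx' : x ∈ matchedSet M := nbr_matched G hM hmax hw' ((G.mem_neighborFinset w x).1 hx)
    have hex : ∃ e ∈ M, x ∈ e := (Finset.mem_filter.1 hx').2
    simp only [hf, dif_pos hex]
    exact ⟨hex.choose_spec.1, hex.choose_spec.2⟩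
  rw [Finset.card_eq_sum_card_fiberwise (f := f) (t := M) (fun x hx => (hmem x hx).1)]
  apply Finset.sum_congr rfl
  intro e heM
  congr 1
  apply Finset.filter_congr
  intro x hx
  constructor
  · rintro rfl; exact (hmem x hx).2
  · intro hxe
    by_contra hne
    exact hM.2 _ (hmem x hx).1 _ heM hne x ⟨(hmem x hx).2, hxe⟩

lemma per_edge {M : Finset (Sym2 V)} (hM : IsMatchingSet G M)
    (hmax : ∀ M' : Finset (Sym2 V), IsMatchingSet G M' → M'.card ≤ M.card)
    {u v : V} (he : s(u, v) ∈ M) :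
    ∑ w ∈ (matchedSet M)ᶜ, ((G.neighborFinset w).filter (fun x => x ∈ s(u, v))).card
      ≤ max (G.degree u - 1) (G.degree v - 1)
        + (if ∀ w ∈ s(u, v), G.degree w = 2 then 1 else 0) := by
  have hadj : G.Adj u v := G.mem_edgeSet.1 (hM.1 _ he)
  have huv : u ≠ v := G.ne_of_adj hadj
  have key : ∀ w : V, ((G.neighborFinset w).filter (fun x => x ∈ s(u, v))).card
      = (if G.Adj w u then 1 else 0) + (if G.Adj w v then 1 else 0) := by
    intro w
    have hsplit : (G.neighborFinset w).filter (fun x => x ∈ s(u, v))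
        = ((G.neighborFinset w).filter (fun x => x = u))
          ∪ ((G.neighborFinset w).filter (fun x => x = v)) := by
      rw [← Finset.filter_or]
      exact Finset.filter_congr (by intro x _; simp [Sym2.mem_iff])
    rw [hsplit, Finset.card_union_of_disjoint (by
        simp only [Finset.disjoint_left, Finset.mem_filter]
        rintro a ⟨_, rfl⟩ ⟨_, rfl⟩
        exact huv rfl)]
    have hone : ∀ a : V, ((G.neighborFinset w).filter (fun x => x = a)).card
        = (if G.Adj w a then 1 else 0) := by
      intro a
      by_cases h : G.Adj w a
      · rw [if_pos h]
        convert Finset.card_singleton a using 2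
        ext x
        simp only [Finset.mem_filter, SimpleGraph.mem_neighborFinset, Finset.mem_singleton]
        constructor
        · exact fun hx => hx.2
        · rintro rfl; exact ⟨h, rfl⟩
      · rw [if_neg h, Finset.card_eq_zero]
        ext x
        simp only [Finset.mem_filter, SimpleGraph.mem_neighborFinset, Finset.notMem_empty,
          iff_false, not_and]
        rintro hx rfl; exact h hx
    rw [hone u, hone v]
  simp only [key]
  rw [Finset.sum_add_distrib, ← Finset.card_filter, ← Finset.card_filter]
  set U := (matchedSet M)ᶜ with hU
  set Au := U.filter (fun w => G.Adj w u) with hAu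
  set Av := U.filter (fun w => G.Adj w v) with hAv
  have hmemAu : ∀ w ∈ Au, w ∉ matchedSet M ∧ G.Adj w u := by
    intro w hw
    obtain ⟨h1, h2⟩ := Finset.mem_filter.1 hw
    exact ⟨Finset.mem_compl.1 h1, h2⟩
  have hmemAv : ∀ w ∈ Av, w ∉ matchedSet M ∧ G.Adj w v := by
    intro w hw
    obtain ⟨h1, h2⟩ := Finset.mem_filter.1 hw
    exact ⟨Finset.mem_compl.1 h1, h2⟩
  have hAubound : Au.card ≤ G.degree u - 1 := by
    have hsub : Au ⊆ (G.neighborFinset u).erase v := by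
      intro w hw
      obtain ⟨h1, h2⟩ := hmemAu w hw
      exact Finset.mem_erase.2 ⟨fun h => notMem_edge_of_unmatched h1 he (h ▸ Sym2.mem_mk_right u v),
        (G.mem_neighborFinset u w).2 h2.symm⟩
    calc Au.card ≤ _ := Finset.card_le_card hsub
      _ = G.degree u - 1 := by
        rw [Finset.card_erase_of_mem ((G.mem_neighborFinset u v).2 hadj),
          SimpleGraph.card_neighborFinset_eq_degree]
  have hAvbound : Av.card ≤ G.degree v - 1 := by
    have hsub : Av ⊆ (G.neighborFinset v).erase u := by
      intro w hw
      obtain ⟨h1, h2⟩ := hmemAv w hw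
      exact Finset.mem_erase.2 ⟨fun h => notMem_edge_of_unmatched h1 he (h ▸ Sym2.mem_mk_left u v),
        (G.mem_neighborFinset v w).2 h2.symm⟩
    calc Av.card ≤ _ := Finset.card_le_card hsub
      _ = G.degree v - 1 := by
        rw [Finset.card_erase_of_mem ((G.mem_neighborFinset v u).2 hadj.symm),
          SimpleGraph.card_neighborFinset_eq_degree]
  have hiff : (∀ w ∈ s(u, v), G.degree w = 2) ↔ (G.degree u = 2 ∧ G.degree v = 2) := by
    constructor
    · intro h; exact ⟨h u (Sym2.mem_mk_left u v), h v (Sym2.mem_mk_right u v)⟩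
    · rintro ⟨h1, h2⟩ w hw
      rcases Sym2.mem_iff.1 hw with rfl | rfl <;> assumption
  rcases Finset.eq_empty_or_nonempty Au with hAue | ⟨w₀, hw₀⟩
  · have h1 := le_max_right (G.degree u - 1) (G.degree v - 1)
    rw [hAue]
    simp only [Finset.card_empty, zero_add]
    exact le_add_right (hAvbound.trans h1)
  rcases Finset.eq_empty_or_nonempty Av with hAve | ⟨w₁, hw₁⟩
  · have h1 := le_max_left (G.degree u - 1) (G.degree v - 1)
    rw [hAve]
    simp only [Finset.card_empty, add_zero]
    exact le_add_right (hAubound.trans h1)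
  · have haug : ∀ w ∈ Au, ∀ w' ∈ Av, w = w' := by
      intro w hw w' hw'
      exact aug G hM hmax he (hmemAu w hw).1 (hmemAv w' hw').1 (hmemAu w hw).2 (hmemAv w' hw').2
    have hAu1 : Au.card ≤ 1 := by
      apply Finset.card_le_one.2
      intro a ha b hb
      rw [haug a ha w₁ hw₁, haug b hb w₁ hw₁]
    have hAv1 : Av.card ≤ 1 := by
      apply Finset.card_le_one.2
      intro a ha b hb
      rw [← haug w₀ hw₀ a ha, ← haug w₀ hw₀ b hb]
    have hdu : 2 ≤ G.degree u := by
      have hsub : ({v, w₀} : Finset V) ⊆ G.neighborFinset u := by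
        intro z hz
        rcases Finset.mem_insert.1 hz with rfl | hz
        · exact (G.mem_neighborFinset u z).2 hadj
        · rw [Finset.mem_singleton.1 hz]
          exact (G.mem_neighborFinset u w₀).2 (hmemAu w₀ hw₀).2.symm
      have hne : v ≠ w₀ := fun h =>
        notMem_edge_of_unmatched (hmemAu w₀ hw₀).1 he (h ▸ Sym2.mem_mk_right u v)
      calc 2 = ({v, w₀} : Finset V).card := (Finset.card_pair hne).symm
        _ ≤ (G.neighborFinset u).card := Finset.card_le_card hsub
        _ = G.degree u := SimpleGraph.card_neighborFinset_eq_degree ..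
    have hdv : 2 ≤ G.degree v := by
      have hsub : ({u, w₁} : Finset V) ⊆ G.neighborFinset v := by
        intro z hz
        rcases Finset.mem_insert.1 hz with rfl | hz
        · exact (G.mem_neighborFinset v z).2 hadj.symm
        · rw [Finset.mem_singleton.1 hz]
          exact (G.mem_neighborFinset v w₁).2 (hmemAv w₁ hw₁).2.symm
      have hne : u ≠ w₁ := fun h =>
        notMem_edge_of_unmatched (hmemAv w₁ hw₁).1 he (h ▸ Sym2.mem_mk_left u v)
      calc 2 = ({u, w₁} : Finset V).card := (Finset.card_pair hne).symm
        _ ≤ (G.neighborFinset v).card := Finset.card_le_card hsub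
        _ = G.degree v := SimpleGraph.card_neighborFinset_eq_degree ..
    have h1 := le_max_left (G.degree u - 1) (G.degree v - 1)
    have h2 := le_max_right (G.degree u - 1) (G.degree v - 1)
    by_cases hP : G.degree u = 2 ∧ G.degree v = 2
    · rw [if_pos (hiff.2 hP)]
      omega
    · rw [if_neg (fun h => hP (hiff.1 h))]
      omega

end Aux


/-- If `M` is a maximum matching in `G`, then
`Σ_{uv ∈ M} max(d(u)−1, d(v)−1) + |{uv ∈ M : d(u)=d(v)=2}| ≥ Σ_{w ∈ U_M} d(w)`. -/
theorem maximum_matching_sum_bound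
    {V : Type*} [Fintype V] (G : SimpleGraph V)
    (M : Finset (Sym2 V)) (hM : IsMatchingSet G M)
    (hmax : ∀ M' : Finset (Sym2 V), IsMatchingSet G M' → M'.card ≤ M.card) :
    ∑ w ∈ (matchedSet M)ᶜ, G.degree w ≤
      (∑ e ∈ M, Sym2.lift
          ⟨fun a b => max (G.degree a - 1) (G.degree b - 1), fun a b => max_comm _ _⟩ e)
        + (M.filter (fun e => ∀ w ∈ e, G.degree w = 2)).card := by

  rw [Finset.sum_congr rfl (fun w hw => deg_split G hM hmax hw), Finset.sum_comm,
    Finset.card_filter, ← Finset.sum_add_distrib]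
  apply Finset.sum_le_sum
  intro e heM
  induction e using Sym2.ind with
  | _ u v =>
    rw [Sym2.lift_mk]
    exact per_edge G hM hmax heM
end

section
/- Every ℓ-regular graph G on n vertices with ℓ ≥ 2 satisfies ν(G) ≥ n/3, and this is sharp: a disjoint union of n/3 triangles (n divisible by 3) is 2-regular with matching number exactly n/3. -/
open scoped Classical

/-- Disjoint union of triangles on `n` vertices (`3 ∣ n`): `i ≠ j` adjacent iff
they lie in the same block of three consecutive vertices. -/
def disjointTriangles (n : ℕ) : SimpleGraph (Fin n) :=
  SimpleGraph.fromRel (fun i j => (i : ℕ) / 3 = (j : ℕ) / 3)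

lemma dt_adj {n : ℕ} (i j : Fin n) :
    (disjointTriangles n).Adj i j ↔ i ≠ j ∧ ((i:ℕ)/3 = (j:ℕ)/3) := by
  simp only [disjointTriangles, SimpleGraph.fromRel_adj]; tauto

lemma dt_regular (n : ℕ) (hn : 3 ∣ n) : (disjointTriangles n).IsRegularOfDegree 2 := by
  obtain ⟨m, rfl⟩ := hn
  intro i
  have hi := i.isLt
  have h0 : 3 * ((i:ℕ)/3) < 3*m := by omega
  have h1 : 3 * ((i:ℕ)/3) + 1 < 3*m := by omega
  have h2 : 3 * ((i:ℕ)/3) + 2 < 3*m := by omega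
  have hb : (disjointTriangles (3*m)).neighborFinset i =
      ({⟨3*((i:ℕ)/3), h0⟩, ⟨3*((i:ℕ)/3)+1, h1⟩, ⟨3*((i:ℕ)/3)+2, h2⟩} : Finset (Fin (3*m))).erase i := by
    ext j
    simp only [SimpleGraph.mem_neighborFinset, dt_adj, Finset.mem_erase, Finset.mem_insert,
      Finset.mem_singleton, Fin.ext_iff, ne_eq]
    constructor
    · rintro ⟨hne, hdiv⟩
      refine ⟨by simpa [Fin.ext_iff, eq_comm] using hne, ?_⟩
      omega
    · rintro ⟨hne, h⟩
      refine ⟨by simpa [Fin.ext_iff, eq_comm] using hne, by omega⟩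
  have hmem : i ∈ ({⟨3*((i:ℕ)/3), h0⟩, ⟨3*((i:ℕ)/3)+1, h1⟩, ⟨3*((i:ℕ)/3)+2, h2⟩} : Finset (Fin (3*m))) := by
    simp only [Finset.mem_insert, Finset.mem_singleton, Fin.ext_iff]
    omega
  have hcard : ({⟨3*((i:ℕ)/3), h0⟩, ⟨3*((i:ℕ)/3)+1, h1⟩, ⟨3*((i:ℕ)/3)+2, h2⟩} : Finset (Fin (3*m))).card = 3 := by
    rw [Finset.card_insert_of_notMem, Finset.card_insert_of_notMem, Finset.card_singleton] <;>
      simp [Fin.ext_iff]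
  rw [SimpleGraph.degree, hb, Finset.card_erase_of_mem hmem, hcard]

lemma dt_exists (n : ℕ) (hn : 3 ∣ n) :
    ∃ M : Finset (Sym2 (Fin n)),
        IsMatchingSet (disjointTriangles n) M ∧ M.card = n / 3 := by
  obtain ⟨m, rfl⟩ := hn
  refine ⟨Finset.univ.image (fun k : Fin m =>
    s((⟨3*(k:ℕ), by have := k.isLt; omega⟩ : Fin (3*m)), (⟨3*(k:ℕ)+1, by have := k.isLt; omega⟩ : Fin (3*m)))), ?_, ?_⟩
  · constructor
    · intro e he
      simp only [Finset.mem_image, Finset.mem_univ, true_and] at he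
      obtain ⟨k, rfl⟩ := he
      rw [SimpleGraph.mem_edgeSet, dt_adj]
      constructor
      · simp [Fin.ext_iff]
      · simp only []; omega
    · intro e he f hf hne v hv
      simp only [Finset.mem_image, Finset.mem_univ, true_and] at he hf
      obtain ⟨k, rfl⟩ := he
      obtain ⟨l, rfl⟩ := hf
      obtain ⟨hv1, hv2⟩ := hv
      rw [Sym2.mem_iff] at hv1 hv2
      have hkl : (k:ℕ) ≠ (l:ℕ) := by
        intro h
        exact hne (by rw [Fin.ext_iff.mpr h])
      rcases hv1 with rfl | rfl <;> rcases hv2 with h | h <;>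
        · rw [Fin.ext_iff] at h; simp at h; omega
  · rw [Finset.card_image_of_injective _ ?_, Finset.card_univ, Fintype.card_fin]
    · omega
    · intro k l h
      rw [Sym2.eq_iff] at h
      rcases h with ⟨h, -⟩ | ⟨h, -⟩ <;> (rw [Fin.ext_iff] at h ⊢; simp at h; omega)

lemma dt_two_mem {n : ℕ} {e : Sym2 (Fin n)} (he : e ∈ (disjointTriangles n).edgeSet) :
    ∃ a b : Fin n, a ∈ e ∧ b ∈ e ∧ a ≠ b ∧ (∀ v : Fin n, v ∈ e → (v:ℕ)/3 = (a:ℕ)/3) := by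
  induction e using Sym2.ind with
  | _ a b =>
    rw [SimpleGraph.mem_edgeSet, dt_adj] at he
    refine ⟨a, b, Sym2.mem_mk_left a b, Sym2.mem_mk_right a b, he.1, ?_⟩
    intro v hv
    rw [Sym2.mem_iff] at hv
    rcases hv with rfl | rfl
    · rfl
    · omega

lemma dt_upper (n : ℕ) (hn : 3 ∣ n) (M : Finset (Sym2 (Fin n)))
    (hM : IsMatchingSet (disjointTriangles n) M) : M.card ≤ n / 3 := by
  obtain ⟨hedge, hdisj⟩ := hM
  have key : ∀ e ∈ M, ((e.out.1 : ℕ)/3 ∈ Finset.range (n/3)) := by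
    intro e he
    have hlt := e.out.1.isLt
    simp only [Finset.mem_range]
    omega
  have hc := Finset.card_le_card_of_injOn (fun e : Sym2 (Fin n) => ((e.out.1 : Fin n) : ℕ)/3) key ?_
  · simpa using hc
  · intro e he f hf hef
    by_contra hne
    obtain ⟨a, b, ha, hb, hab, hbl⟩ := dt_two_mem (hedge e he)
    obtain ⟨a', b', ha', hb', hab', hbl'⟩ := dt_two_mem (hedge f hf)
    have h1 := hbl _ (Sym2.out_fst_mem e)
    have h2 := hbl' _ (Sym2.out_fst_mem f)
    have hbb := hbl b hb
    have hbb' := hbl' b' hb'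
    simp only at hef
    have d1 : a ≠ a' := fun h => hdisj e he f hf hne a ⟨ha, h ▸ ha'⟩
    have d2 : a ≠ b' := fun h => hdisj e he f hf hne a ⟨ha, h ▸ hb'⟩
    have d3 : b ≠ a' := fun h => hdisj e he f hf hne b ⟨hb, h ▸ ha'⟩
    have d4 : b ≠ b' := fun h => hdisj e he f hf hne b ⟨hb, h ▸ hb'⟩
    simp only [ne_eq, Fin.ext_iff] at hab hab' d1 d2 d3 d4
    have := a.isLt
    omega

/-- endpoints of a Sym2 element as a Finset -/
def endpoints {V : Type*} [DecidableEq V] : Sym2 V → Finset V :=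
  Sym2.lift ⟨fun a b => ({a, b} : Finset V), fun a b => Finset.pair_comm a b⟩

lemma mem_endpoints {V : Type*} [DecidableEq V] (e : Sym2 V) (v : V) :
    v ∈ endpoints e ↔ v ∈ e := by
  induction e using Sym2.ind with
  | _ x y => simp [endpoints, Sym2.mem_iff]

lemma card_endpoints_le {V : Type*} [DecidableEq V] (e : Sym2 V) :
    (endpoints e).card ≤ 2 := by
  induction e using Sym2.ind with
  | _ x y =>
    simp only [endpoints, Sym2.lift_mk]
    exact le_trans (Finset.card_insert_le _ _) (by simp)

lemma part1 (V : Type) [Fintype V] (G : SimpleGraph V) (ℓ : ℕ) (hℓ : 2 ≤ ℓ)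
    (hreg : G.IsRegularOfDegree ℓ) :
    ∃ M : Finset (Sym2 V), IsMatchingSet G M ∧ (Fintype.card V : ℚ) / 3 ≤ M.card := by
  classical
  -- a maximum matching
  have hne : ((Finset.univ : Finset (Finset (Sym2 V))).filter (fun M => IsMatchingSet G M)).Nonempty := by
    refine ⟨∅, ?_⟩
    simp only [Finset.mem_filter, Finset.mem_univ, true_and]
    exact ⟨by simp, by simp⟩
  obtain ⟨M, hMmem, hMmax'⟩ := Finset.exists_max_image _ Finset.card hne
  rw [Finset.mem_filter] at hMmem
  have hM : IsMatchingSet G M := hMmem.2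
  have hMmax : ∀ M' : Finset (Sym2 V), IsMatchingSet G M' → M'.card ≤ M.card := by
    intro M' h
    exact hMmax' M' (by simp [Finset.mem_filter, h])
  refine ⟨M, hM, ?_⟩
  -- unmatched vertices
  set U : Finset V := Finset.univ.filter (fun v => ∀ e ∈ M, v ∉ e) with hU
  have hUmem : ∀ v, v ∈ U ↔ ∀ e ∈ M, v ∉ e := by
    intro v; simp [hU]
  -- uniqueness of covering edge
  have huniq : ∀ (v : V), ∀ e ∈ M, ∀ f ∈ M, v ∈ e → v ∈ f → e = f := by
    intro v e he f hf hve hvf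
    by_contra h
    exact hM.2 e he f hf h v ⟨hve, hvf⟩
  -- neighbors of unmatched vertices are matched
  have hmatched : ∀ u v : V, u ∈ U → G.Adj u v → ∃ e ∈ M, v ∈ e := by
    intro u v hu hadj
    by_contra hv
    push_neg at hv
    have hnotmem : s(u, v) ∉ M := fun h => (hUmem u).1 hu _ h (Sym2.mem_mk_left u v)
    have hins : IsMatchingSet G (insert s(u,v) M) := by
      constructor
      · intro e he
        rcases Finset.mem_insert.1 he with rfl | he
        · exact (SimpleGraph.mem_edgeSet G).2 hadj
        · exact hM.1 e he
      · intro e he' f hf' hef w hw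
        rcases Finset.mem_insert.1 he' with rfl | heM'
        · rcases Finset.mem_insert.1 hf' with rfl | hfM'
          · exact hef rfl
          · rcases Sym2.mem_iff.1 hw.1 with rfl | rfl
            · exact (hUmem w).1 hu f hfM' hw.2
            · exact hv f hfM' hw.2
        · rcases Finset.mem_insert.1 hf' with rfl | hfM'
          · rcases Sym2.mem_iff.1 hw.2 with rfl | rfl
            · exact (hUmem w).1 hu e heM' hw.1
            · exact hv e heM' hw.1
          · exact hM.2 e heM' f hfM' hef w hw
    have := hMmax _ hins
    rw [Finset.card_insert_of_notMem hnotmem] at this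
    omega
  -- the augmenting-swap lemma
  have hswap : ∀ x y u u' : V, s(x,y) ∈ M → u ∈ U → u' ∈ U →
      G.Adj u x → G.Adj u' y → u = u' := by
    intro x y u u' he hu hu' hux hu'y
    by_contra hne'
    have hxy : G.Adj x y := (SimpleGraph.mem_edgeSet G).1 (hM.1 _ he)
    have hxmem : x ∈ s(x,y) := Sym2.mem_mk_left x y
    have hymem : y ∈ s(x,y) := Sym2.mem_mk_right x y
    have hunm : ∀ w : V, w ∈ U → ∀ f ∈ M, w ∉ f := fun w hw => (hUmem w).1 hw
    have huy : u ≠ y := fun h => hunm u hu _ he (h ▸ hymem)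
    have hux' : u ≠ x := G.ne_of_adj hux
    have hu'x : u' ≠ x := fun h => hunm u' hu' _ he (h ▸ hxmem)
    have hu'y' : u' ≠ y := G.ne_of_adj hu'y
    have hxyne : x ≠ y := G.ne_of_adj hxy
    set M' : Finset (Sym2 V) := insert s(u,x) (insert s(u',y) (M.erase s(x,y))) with hM'
    have hins : IsMatchingSet G M' := by
      constructor
      · intro e he'
        rcases Finset.mem_insert.1 he' with rfl | he'
        · exact (SimpleGraph.mem_edgeSet G).2 hux
        rcases Finset.mem_insert.1 he' with rfl | he'
        · exact (SimpleGraph.mem_edgeSet G).2 hu'y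
        · exact hM.1 _ (Finset.mem_of_mem_erase he')
      · have haux1 : ∀ w : V, ¬(w ∈ s(u,x) ∧ w ∈ s(u',y)) := by
          rintro w ⟨h1, h2⟩
          rcases Sym2.mem_iff.1 h1 with rfl | rfl <;> rcases Sym2.mem_iff.1 h2 with h | h
          · exact hne' h
          · exact huy h
          · exact hu'x h.symm
          · exact hxyne h
        have haux2 : ∀ f ∈ M.erase s(x,y), ∀ w : V, ¬(w ∈ s(u,x) ∧ w ∈ f) := by
          rintro f hf w ⟨h1, h2⟩
          have hfM := Finset.mem_of_mem_erase hf
          rcases Sym2.mem_iff.1 h1 with rfl | rfl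
          · exact hunm w hu f hfM h2
          · exact (Finset.ne_of_mem_erase hf) (huniq w f hfM _ he h2 hxmem)
        have haux3 : ∀ f ∈ M.erase s(x,y), ∀ w : V, ¬(w ∈ s(u',y) ∧ w ∈ f) := by
          rintro f hf w ⟨h1, h2⟩
          have hfM := Finset.mem_of_mem_erase hf
          rcases Sym2.mem_iff.1 h1 with rfl | rfl
          · exact hunm w hu' f hfM h2
          · exact (Finset.ne_of_mem_erase hf) (huniq w f hfM _ he h2 hymem)
        intro e he' f hf' hef w hw
        rcases Finset.mem_insert.1 he' with rfl | he' <;> rcases Finset.mem_insert.1 hf' with rfl | hf'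
        · exact hef rfl
        · rcases Finset.mem_insert.1 hf' with rfl | hf'
          · exact haux1 w hw
          · exact haux2 f hf' w hw
        · rcases Finset.mem_insert.1 he' with rfl | he'
          · exact haux1 w ⟨hw.2, hw.1⟩
          · exact haux2 e he' w ⟨hw.2, hw.1⟩
        · rcases Finset.mem_insert.1 he' with rfl | he' <;> rcases Finset.mem_insert.1 hf' with rfl | hf'
          · exact hef rfl
          · exact haux3 f hf' w hw
          · exact haux3 e he' w ⟨hw.2, hw.1⟩
          · exact hM.2 e (Finset.mem_of_mem_erase he') f (Finset.mem_of_mem_erase hf') hef w hw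
    have hn1 : s(u',y) ∉ M.erase s(x,y) := by
      intro h
      exact hunm u' hu' _ (Finset.mem_of_mem_erase h) (Sym2.mem_mk_left u' y)
    have hn2 : s(u,x) ∉ insert s(u',y) (M.erase s(x,y)) := by
      intro h
      rcases Finset.mem_insert.1 h with h | h
      · have : u ∈ s(u',y) := h ▸ Sym2.mem_mk_left u x
        rcases Sym2.mem_iff.1 this with h' | h'
        · exact hne' h'
        · exact huy h'
      · exact hunm u hu _ (Finset.mem_of_mem_erase h) (Sym2.mem_mk_left u x)
    have hcard : M'.card = M.card + 1 := by
      rw [hM', Finset.card_insert_of_notMem hn2, Finset.card_insert_of_notMem hn1,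
        Finset.card_erase_of_mem he]
      have : 1 ≤ M.card := Finset.card_pos.2 ⟨_, he⟩
      omega
    have := hMmax _ hins
    omega
  -- the incidence counting
  set F : Finset (V × V) := Finset.univ.filter (fun p : V × V => p.1 ∈ U ∧ G.Adj p.1 p.2) with hF
  have hFmem : ∀ p : V × V, p ∈ F ↔ p.1 ∈ U ∧ G.Adj p.1 p.2 := by
    intro p; simp [hF]
  have hFcard : F.card = ℓ * U.card := by
    have : F = U.biUnion (fun u => (G.neighborFinset u).image (fun v => (u, v))) := by
      ext ⟨a, b⟩
      simp only [hFmem, Finset.mem_biUnion, Finset.mem_image, SimpleGraph.mem_neighborFinset,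
        Prod.mk.injEq]
      constructor
      · rintro ⟨h1, h2⟩; exact ⟨a, h1, b, h2, rfl, rfl⟩
      · rintro ⟨u, hu, v, hv, rfl, rfl⟩; exact ⟨hu, hv⟩
    rw [this, Finset.card_biUnion]
    · have : ∀ u ∈ U, ((G.neighborFinset u).image (fun v => (u, v))).card = ℓ := by
        intro u _
        rw [Finset.card_image_of_injective _ (fun a b h => (Prod.ext_iff.1 h).2)]
        exact hreg u
      rw [Finset.sum_congr rfl this, Finset.sum_const, smul_eq_mul, mul_comm]
    · intro u _ u' _ hne'
      simp only [Finset.disjoint_left, Finset.mem_image]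
      rintro ⟨a, b⟩ ⟨v, hv, h⟩ ⟨v', hv', h'⟩
      rw [Prod.mk.injEq] at h h'
      exact hne' (h.1.trans h'.1.symm)
  -- map each incidence to the covering edge
  set φ : V × V → Sym2 V := fun p =>
    if h : ∃ e ∈ M, p.2 ∈ e then h.choose else s(p.1, p.2) with hφ
  have hφspec : ∀ p ∈ F, φ p ∈ M ∧ p.2 ∈ φ p := by
    intro p hp
    rw [hFmem] at hp
    have h : ∃ e ∈ M, p.2 ∈ e := hmatched p.1 p.2 hp.1 hp.2
    rw [hφ]
    simp only [dif_pos h]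
    exact ⟨h.choose_spec.1, h.choose_spec.2⟩
  have hmapsto : ∀ p ∈ F, φ p ∈ M := fun p hp => (hφspec p hp).1
  have hfiber : ∀ e ∈ M, (F.filter (fun p => φ p = e)).card ≤ ℓ := by
    intro e heM
    obtain ⟨x, y, rfl⟩ : ∃ x y, e = s(x, y) := by
      induction e using Sym2.ind with | _ x y => exact ⟨x, y, rfl⟩
    have hxy : G.Adj x y := (SimpleGraph.mem_edgeSet G).1 (hM.1 _ heM)
    have hsnd : ∀ p ∈ F.filter (fun p => φ p = s(x,y)), p.2 = x ∨ p.2 = y := by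
      intro p hp
      rw [Finset.mem_filter] at hp
      have := (hφspec p hp.1).2
      rw [hp.2] at this
      exact Sym2.mem_iff.1 this
    have hinfo : ∀ p ∈ F.filter (fun p => φ p = s(x,y)), p.1 ∈ U ∧ G.Adj p.1 p.2 := by
      intro p hp
      exact (hFmem p).1 (Finset.mem_filter.1 hp).1
    by_cases hx : ∃ u ∈ U, G.Adj u x
    · by_cases hy : ∃ u ∈ U, G.Adj u y
      · -- both sides attacked: a unique common attacker
        obtain ⟨u0, hu0, hu0x⟩ := hx
        obtain ⟨u1, hu1, hu1y⟩ := hy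
        have h01 : u0 = u1 := hswap x y u0 u1 heM hu0 hu1 hu0x hu1y
        subst h01
        have hsub : F.filter (fun p => φ p = s(x,y)) ⊆ {(u0, x), (u0, y)} := by
          intro p hp
          have h1 := hinfo p hp
          have h2 := hsnd p hp
          simp only [Finset.mem_insert, Finset.mem_singleton]
          rcases h2 with h2 | h2
          · left
            have : p.1 = u0 := hswap x y p.1 u0 heM h1.1 hu1 ((by rw [← h2]; exact h1.2) : G.Adj p.1 x) hu1y
            exact Prod.ext this h2
          · right
            have : u0 = p.1 := hswap x y u0 p.1 heM hu0 h1.1 hu0x ((by rw [← h2]; exact h1.2) : G.Adj p.1 y)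
            exact Prod.ext this.symm h2
        calc (F.filter (fun p => φ p = s(x,y))).card ≤ ({(u0, x), (u0, y)} : Finset (V × V)).card :=
              Finset.card_le_card hsub
          _ ≤ 2 := le_trans (Finset.card_insert_le _ _) (by simp)
          _ ≤ ℓ := hℓ
      · -- nobody attacks y: inject into N(x) \ {y}
        have hsub : ∀ p ∈ F.filter (fun p => φ p = s(x,y)), p.1 ∈ (G.neighborFinset x).erase y ∧ p.2 = x := by
          intro p hp
          have h1 := hinfo p hp
          have h2 : p.2 = x := by
            rcases hsnd p hp with h | h
            · exact h
            · exact absurd ⟨p.1, h1.1, h ▸ h1.2⟩ hy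
          refine ⟨Finset.mem_erase.2 ⟨?_, ?_⟩, h2⟩
          · intro h
            exact (hUmem p.1).1 h1.1 _ heM (by rw [h]; exact Sym2.mem_mk_right x y)
          · rw [SimpleGraph.mem_neighborFinset]
            exact ((by rw [← h2]; exact h1.2) : G.Adj p.1 x).symm
        have hinj := Finset.card_le_card_of_injOn (fun p => p.1)
          (fun p hp => (hsub p hp).1) ?_
        · calc (F.filter (fun p => φ p = s(x,y))).card ≤ ((G.neighborFinset x).erase y).card := hinj
            _ = ℓ - 1 := by
              rw [Finset.card_erase_of_mem (by rw [SimpleGraph.mem_neighborFinset]; exact hxy)]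
              have hdx : (G.neighborFinset x).card = ℓ := hreg x
              rw [hdx]
            _ ≤ ℓ := Nat.sub_le _ _
        · intro p hp q hq hpq
          exact Prod.ext hpq ((hsub p hp).2.trans (hsub q hq).2.symm)
    · -- nobody attacks x: inject into N(y) \ {x}
      have hsub : ∀ p ∈ F.filter (fun p => φ p = s(x,y)), p.1 ∈ (G.neighborFinset y).erase x ∧ p.2 = y := by
        intro p hp
        have h1 := hinfo p hp
        have h2 : p.2 = y := by
          rcases hsnd p hp with h | h
          · exact absurd ⟨p.1, h1.1, h ▸ h1.2⟩ hx
          · exact h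
        refine ⟨Finset.mem_erase.2 ⟨?_, ?_⟩, h2⟩
        · intro h
          exact (hUmem p.1).1 h1.1 _ heM (by rw [h]; exact Sym2.mem_mk_left x y)
        · rw [SimpleGraph.mem_neighborFinset]
          exact ((by rw [← h2]; exact h1.2) : G.Adj p.1 y).symm
      have hinj := Finset.card_le_card_of_injOn (fun p => p.1)
        (fun p hp => (hsub p hp).1) ?_
      · calc (F.filter (fun p => φ p = s(x,y))).card ≤ ((G.neighborFinset y).erase x).card := hinj
          _ = ℓ - 1 := by
            rw [Finset.card_erase_of_mem (by rw [SimpleGraph.mem_neighborFinset]; exact hxy.symm)]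
            have hdy : (G.neighborFinset y).card = ℓ := hreg y
            rw [hdy]
          _ ≤ ℓ := Nat.sub_le _ _
      · intro p hp q hq hpq
        exact Prod.ext hpq ((hsub p hp).2.trans (hsub q hq).2.symm)
  have hcount : F.card ≤ ℓ * M.card :=
    Finset.card_le_mul_card_image_of_maps_to hmapsto ℓ hfiber
  have hUM : U.card ≤ M.card := by
    rw [hFcard] at hcount
    exact Nat.le_of_mul_le_mul_left hcount (by omega)
  -- matched set is small
  have hmatchedcard : (matchedSet M).card ≤ 2 * M.card := by
    have hsub : matchedSet M ⊆ M.biUnion endpoints := by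
      intro v hv
      rw [matchedSet, Finset.mem_filter] at hv
      obtain ⟨e, he, hve⟩ := hv.2
      exact Finset.mem_biUnion.2 ⟨e, he, (mem_endpoints e v).2 hve⟩
    calc (matchedSet M).card ≤ (M.biUnion endpoints).card := Finset.card_le_card hsub
      _ ≤ ∑ e ∈ M, (endpoints e).card := Finset.card_biUnion_le
      _ ≤ ∑ e ∈ M, 2 := Finset.sum_le_sum (fun e _ => card_endpoints_le e)
      _ = 2 * M.card := by rw [Finset.sum_const, smul_eq_mul, mul_comm]
  -- total count
  have htotal : Fintype.card V ≤ 3 * M.card := by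
    have hcover : (Finset.univ : Finset V) ⊆ U ∪ matchedSet M := by
      intro v _
      by_cases h : ∃ e ∈ M, v ∈ e
      · exact Finset.mem_union_right _ (by rw [matchedSet, Finset.mem_filter]; exact ⟨Finset.mem_univ v, h⟩)
      · push_neg at h
        exact Finset.mem_union_left _ ((hUmem v).2 h)
    calc Fintype.card V = (Finset.univ : Finset V).card := (Finset.card_univ).symm
      _ ≤ (U ∪ matchedSet M).card := Finset.card_le_card hcover
      _ ≤ U.card + (matchedSet M).card := Finset.card_union_le _ _
      _ ≤ M.card + 2 * M.card := Nat.add_le_add hUM hmatchedcard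
      _ = 3 * M.card := by ring
  rw [div_le_iff₀ (by norm_num : (0:ℚ) < 3)]
  have : (Fintype.card V : ℚ) ≤ 3 * M.card := by exact_mod_cast htotal
  linarith

/-- Every `ℓ`-regular graph `G` on `n` vertices with `ℓ ≥ 2` satisfies
`ν(G) ≥ n/3`, and this is sharp: a disjoint union of `n/3` triangles
(`3 ∣ n`) is `2`-regular with matching number exactly `n/3`. -/
theorem regular_third_bound_and_sharpness :
    (∀ (V : Type) (_ : Fintype V) (G : SimpleGraph V) (ℓ : ℕ), 2 ≤ ℓ →
      G.IsRegularOfDegree ℓ →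
      ∃ M : Finset (Sym2 V), IsMatchingSet G M ∧ (Fintype.card V : ℚ) / 3 ≤ M.card) ∧
    (∀ n : ℕ, 3 ∣ n →
      (disjointTriangles n).IsRegularOfDegree 2 ∧
      (∃ M : Finset (Sym2 (Fin n)),
          IsMatchingSet (disjointTriangles n) M ∧ M.card = n / 3) ∧
      ∀ M : Finset (Sym2 (Fin n)),
          IsMatchingSet (disjointTriangles n) M → M.card ≤ n / 3) := by
  constructor
  · intro V inst G ℓ hℓ hreg
    exact @part1 V inst G ℓ hℓ hreg
  · intro n hn
    exact ⟨dt_regular n hn, dt_exists n hn, fun M hM => dt_upper n hn M hM⟩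
end

section
/- Let d be an arranged graphic sequence on n vertices and δ a positive even integer with δ ≤ n. If the sequence d with δ appended is graphic, then for every even δ' with 0 < δ' < δ, the sequence d with δ' appended is also graphic. -/
open scoped Classical

open scoped symmDiff
open Finset SimpleGraph

set_option linter.unusedSectionVars false

variable {V : Type*}

/-- Replace edge `a‑x` by edge `a‑y` (pivot `a`). -/
def rot (G : SimpleGraph V) (a x y : V) : SimpleGraph V where
  Adj u w := (s(u,w) ≠ s(a,x) ∧ G.Adj u w) ∨ (s(u,w) = s(a,y) ∧ u ≠ w)
  symm := by
    constructor
    intro u w h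
    rcases h with ⟨h1, h2⟩ | ⟨h1, h2⟩
    · exact Or.inl ⟨by rwa [Sym2.eq_swap], h2.symm⟩
    · exact Or.inr ⟨by rwa [Sym2.eq_swap], h2.symm⟩
  loopless := by
    constructor
    intro u h
    rcases h with ⟨_, h⟩ | ⟨_, h⟩
    · exact G.loopless.irrefl u h
    · exact h rfl

lemma rot_adj (G : SimpleGraph V) (a x y u w : V) :
    (rot G a x y).Adj u w ↔ (s(u,w) ≠ s(a,x) ∧ G.Adj u w) ∨ (s(u,w) = s(a,y) ∧ u ≠ w) :=
  Iff.rfl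

section rotDeg
variable [Fintype V] (G : SimpleGraph V) {a x y : V}
  (hax : G.Adj a x) (hay : ¬ G.Adj a y) (hxy : x ≠ y) (hay' : a ≠ y)

include hax hay hxy hay'

lemma rot_nf_x : (rot G a x y).neighborFinset x = (G.neighborFinset x).erase a := by
  have hxa : x ≠ a := (G.ne_of_adj hax).symm
  ext w
  simp only [mem_neighborFinset, rot_adj, mem_erase, Sym2.eq_iff]
  aesop

lemma rot_deg_x : (rot G a x y).degree x + 1 = G.degree x := by
  have : a ∈ G.neighborFinset x := by simpa [mem_neighborFinset] using hax.symm
  simp only [SimpleGraph.degree, rot_nf_x G hax hay hxy hay']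
  exact Finset.card_erase_add_one this

lemma rot_nf_y : (rot G a x y).neighborFinset y = insert a (G.neighborFinset y) := by
  have hya : y ≠ a := hay'.symm
  have hya' : ¬ G.Adj y a := fun h => hay h.symm
  ext w
  simp only [mem_neighborFinset, rot_adj, mem_insert, Sym2.eq_iff]
  aesop

lemma rot_deg_y : (rot G a x y).degree y = G.degree y + 1 := by
  have : a ∉ G.neighborFinset y := by simp [mem_neighborFinset]; exact fun h => hay h.symm
  simp only [SimpleGraph.degree, rot_nf_y G hax hay hxy hay']
  exact Finset.card_insert_of_notMem this

lemma rot_nf_a : (rot G a x y).neighborFinset a = insert y ((G.neighborFinset a).erase x) := by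
  have hax' : a ≠ x := G.ne_of_adj hax
  ext w
  simp only [mem_neighborFinset, rot_adj, mem_insert, mem_erase, Sym2.eq_iff]
  aesop

lemma rot_deg_a : (rot G a x y).degree a = G.degree a := by
  have h1 : x ∈ G.neighborFinset a := by simpa [mem_neighborFinset] using hax
  have h2 : y ∉ (G.neighborFinset a).erase x := by
    simp [mem_neighborFinset, hay]
  simp only [SimpleGraph.degree, rot_nf_a G hax hay hxy hay']
  rw [Finset.card_insert_of_notMem h2, Finset.card_erase_add_one h1]

lemma rot_deg_other {u : V} (hu1 : u ≠ a) (hu2 : u ≠ x) (hu3 : u ≠ y) :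
    (rot G a x y).degree u = G.degree u := by
  have : (rot G a x y).neighborFinset u = G.neighborFinset u := by
    ext w
    simp only [mem_neighborFinset, rot_adj, Sym2.eq_iff]
    aesop
  simp only [SimpleGraph.degree, this]

lemma rot_edgeSet :
    (rot G a x y).edgeSet = (G.edgeSet \ {s(a,x)}) ∪ {s(a,y)} := by
  ext e
  induction e using Sym2.ind with
  | _ u w =>
    simp only [mem_edgeSet, rot_adj, Set.mem_union, Set.mem_diff, Set.mem_singleton_iff,
      mem_edgeSet]
    constructor
    · rintro (⟨h1, h2⟩ | ⟨h1, h2⟩)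
      · exact Or.inl ⟨h2, h1⟩
      · exact Or.inr h1
    · rintro (⟨h1, h2⟩ | h1)
      · exact Or.inl ⟨h2, h1⟩
      · refine Or.inr ⟨h1, ?_⟩
        rintro rfl
        rw [Sym2.eq_iff] at h1
        rcases h1 with ⟨rfl, rfl⟩ | ⟨rfl, rfl⟩ <;> exact hay' rfl

end rotDeg

def delE (G : SimpleGraph V) (a b : V) : SimpleGraph V where
  Adj u w := G.Adj u w ∧ s(u,w) ≠ s(a,b)
  symm := by
    constructor
    intro u w ⟨h1, h2⟩
    exact ⟨h1.symm, by rwa [Sym2.eq_swap]⟩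
  loopless := ⟨fun u h => G.loopless.irrefl u h.1⟩

lemma delE_adj (G : SimpleGraph V) (a b u w : V) :
    (delE G a b).Adj u w ↔ G.Adj u w ∧ s(u,w) ≠ s(a,b) := Iff.rfl

section delDeg
variable [Fintype V] (G : SimpleGraph V) {a b : V} (hab : G.Adj a b)
include hab

lemma delE_deg_a : (delE G a b).degree a + 1 = G.degree a := by
  have hne : a ≠ b := G.ne_of_adj hab
  have : (delE G a b).neighborFinset a = (G.neighborFinset a).erase b := by
    ext w
    simp only [mem_neighborFinset, delE_adj, mem_erase, Sym2.eq_iff]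
    aesop
  have hb : b ∈ G.neighborFinset a := by simpa [mem_neighborFinset] using hab
  simp only [SimpleGraph.degree, this]
  exact Finset.card_erase_add_one hb

lemma delE_deg_b : (delE G a b).degree b + 1 = G.degree b := by
  have hne : b ≠ a := (G.ne_of_adj hab).symm
  have : (delE G a b).neighborFinset b = (G.neighborFinset b).erase a := by
    ext w
    simp only [mem_neighborFinset, delE_adj, mem_erase, Sym2.eq_iff]
    aesop
  have hb : a ∈ G.neighborFinset b := by simpa [mem_neighborFinset] using hab.symm
  simp only [SimpleGraph.degree, this]
  exact Finset.card_erase_add_one hb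

lemma delE_deg_other {u : V} (h1 : u ≠ a) (h2 : u ≠ b) :
    (delE G a b).degree u = G.degree u := by
  have : (delE G a b).neighborFinset u = G.neighborFinset u := by
    ext w
    simp only [mem_neighborFinset, delE_adj, Sym2.eq_iff]
    aesop
  simp only [SimpleGraph.degree, this]

end delDeg

/-- Discrepancy between two graphs: number of edges in exactly one. -/
noncomputable def disc [Fintype V] (G H : SimpleGraph V) : ℕ :=
  (G.edgeFinset ∆ H.edgeFinset).card

lemma disc_eq_zero [Fintype V] {G H : SimpleGraph V} (h : disc G H = 0) : G = H := by
  rw [disc, Finset.card_eq_zero] at h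
  have := Finset.ext_iff.mp h
  refine SimpleGraph.edgeFinset_inj.mp ?_
  ext e
  by_contra hc
  have : e ∈ G.edgeFinset ∆ H.edgeFinset := by
    rw [Finset.mem_symmDiff]
    tauto
  simp [h] at this

lemma disc_rot_lt [Fintype V] (G H : SimpleGraph V) {a x y : V}
    (hax : G.Adj a x) (hay : ¬ G.Adj a y) (hxy : x ≠ y) (hay' : a ≠ y)
    (hH1 : ¬ H.Adj a x) (hH2 : H.Adj a y) :
    disc (rot G a x y) H < disc G H := by
  have hmem : ∀ e, e ∈ (rot G a x y).edgeFinset ↔ (e ∈ G.edgeFinset ∧ e ≠ s(a,x)) ∨ e = s(a,y) := by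
    intro e
    simp only [mem_edgeFinset]
    rw [rot_edgeSet G hax hay hxy hay']
    simp only [Set.mem_union, Set.mem_diff, Set.mem_singleton_iff]
  apply Finset.card_lt_card
  constructor
  · intro e he
    rw [Finset.mem_symmDiff] at he ⊢
    rcases he with ⟨h1, h2⟩ | ⟨h1, h2⟩
    · rw [hmem] at h1
      rcases h1 with ⟨h3, h4⟩ | rfl
      · exact Or.inl ⟨h3, h2⟩
      · exact absurd (SimpleGraph.mem_edgeFinset.mpr hH2) h2
    · refine Or.inr ⟨h1, fun hc => h2 ?_⟩
      rw [hmem]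
      refine Or.inl ⟨hc, ?_⟩
      rintro rfl
      exact hH1 ((H.mem_edgeSet).mp (SimpleGraph.mem_edgeFinset.mp h1))
  · rw [Finset.not_subset]
    refine ⟨s(a,x), ?_, ?_⟩
    · rw [Finset.mem_symmDiff]
      exact Or.inl ⟨SimpleGraph.mem_edgeFinset.mpr hax, fun hc => hH1 (SimpleGraph.mem_edgeFinset.mp hc)⟩
    · rw [Finset.mem_symmDiff]
      push_neg
      constructor
      · intro hc
        rw [hmem] at hc
        rcases hc with ⟨_, h⟩ | h
        · exact absurd rfl h
        · rw [Sym2.eq_iff] at h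
          rcases h with ⟨-, h⟩ | ⟨h, -⟩
          · exact absurd h hxy
          · exact absurd h hay'
      · intro hc
        exact absurd (SimpleGraph.mem_edgeFinset.mp hc) hH1
section MainInduction
variable {V : Type*} [Fintype V]

lemma exists_G_only (G H : SimpleGraph V) (v : V) (h : H.degree v < G.degree v) :
    ∃ a, G.Adj v a ∧ ¬ H.Adj v a := by
  have hns : ¬ G.neighborFinset v ⊆ H.neighborFinset v := by
    intro hsub
    have h2 : G.degree v ≤ H.degree v := Finset.card_le_card hsub
    omega
  obtain ⟨a, ha1, ha2⟩ := Finset.not_subset.mp hns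
  exact ⟨a, by simpa [mem_neighborFinset] using ha1, by simpa [mem_neighborFinset] using ha2⟩

lemma exists_H_only (G H : SimpleGraph V) {a v : V} (hdeg : G.degree a = H.degree a)
    (h1 : G.Adj a v) (h2 : ¬ H.Adj a v) :
    ∃ x, H.Adj a x ∧ ¬ G.Adj a x := by
  by_contra hc
  push_neg at hc
  have hsub : H.neighborFinset a ⊆ (G.neighborFinset a).erase v := by
    intro w hw
    rw [mem_neighborFinset] at hw
    rw [Finset.mem_erase, mem_neighborFinset]
    exact ⟨by rintro rfl; exact h2 hw, hc w hw⟩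
  have hv : v ∈ G.neighborFinset a := by simpa [mem_neighborFinset] using h1
  have := Finset.card_le_card hsub
  rw [Finset.card_erase_of_mem hv] at this
  have hpos : 0 < (G.neighborFinset a).card :=
    Finset.card_pos.mpr ⟨v, hv⟩
  simp only [SimpleGraph.degree] at hdeg
  omega

lemma main_lemma (D : ℕ) : ∀ (G H : SimpleGraph V) (v c : V), disc G H ≤ D →
    (∀ u, u ≠ v → u ≠ c → G.degree u = H.degree u) →
    (v = c → H.degree v + 2 ≤ G.degree v) →
    (v ≠ c → H.degree v + 1 ≤ G.degree v ∧ G.degree c = H.degree c + 1) →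
    ∃ G' : SimpleGraph V, (∀ u, u ≠ v → u ≠ c → G'.degree u = G.degree u) ∧
      (v = c → G'.degree v + 2 = G.degree v) ∧
      (v ≠ c → G'.degree v + 1 = G.degree v ∧ G'.degree c + 1 = G.degree c) := by
  induction D with
  | zero =>
    intro G H v c hD hbal hv hvc
    have h0 : disc G H = 0 := Nat.le_zero.mp hD
    have hGH : G = H := disc_eq_zero h0
    subst hGH
    by_cases h : v = c
    · have := hv h; omega
    · have := (hvc h).2; omega
  | succ D ih =>
    intro G H v c hD hbal hv hvc
    by_cases hvc' : v = c
    · -- closed shape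
      subst hvc'
      have h2 := hv rfl
      obtain ⟨a, hva, hvaH⟩ := exists_G_only G H v (by omega)
      have hav : G.Adj a v := hva.symm
      have havH : ¬ H.Adj a v := fun h => hvaH h.symm
      have hane : a ≠ v := G.ne_of_adj hav
      have hdega : G.degree a = H.degree a := hbal a hane hane
      obtain ⟨c₁, hac₁H, hac₁G⟩ := exists_H_only G H hdega hav havH
      have hc₁v : c₁ ≠ v := by rintro rfl; exact havH hac₁H
      have hac₁ : a ≠ c₁ := H.ne_of_adj hac₁H
      have hvc₁ : v ≠ c₁ := fun h => hc₁v h.symm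
      -- rotate: remove a‑v, add a‑c₁
      set G₁ := rot G a v c₁ with hG₁
      have e1 : G₁.degree v + 1 = G.degree v := rot_deg_x G hav hac₁G hvc₁ hac₁
      have e2 : G₁.degree c₁ = G.degree c₁ + 1 := rot_deg_y G hav hac₁G hvc₁ hac₁
      have e3 : G₁.degree a = G.degree a := rot_deg_a G hav hac₁G hvc₁ hac₁
      have e4 : ∀ u, u ≠ a → u ≠ v → u ≠ c₁ → G₁.degree u = G.degree u :=
        fun u h1 h2 h3 => rot_deg_other G hav hac₁G hvc₁ hac₁ h1 h2 h3
      have hdisc : disc G₁ H ≤ D := by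
        have := disc_rot_lt G H hav hac₁G hvc₁ hac₁ havH hac₁H
        rw [← hG₁] at this
        omega
      obtain ⟨G', hb', hcl1, hcl2⟩ := ih G₁ H v c₁ hdisc
        (by
          intro u hu1 hu2
          by_cases hua : u = a
          · subst hua; rw [e3]; exact hdega
          · rw [e4 u hua hu1 hu2]; exact hbal u hu1 hu1)
        (fun h => absurd h.symm hc₁v)
        (by
          intro _
          constructor
          · omega
          · rw [e2, hbal c₁ hc₁v hc₁v])
      have ⟨f1, f2⟩ := hcl2 hvc₁
      refine ⟨G', ?_, fun _ => by omega, fun h => absurd rfl h⟩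
      intro u hu1 _
      by_cases huc : u = c₁
      · subst huc
        have := hbal u hu1 hu1
        omega
      · by_cases hua : u = a
        · subst hua; rw [hb' u hu1 huc, e3]
        · rw [hb' u hu1 huc, e4 u hua hu1 huc]
    · -- open shape, v ≠ c
      obtain ⟨hv1, hc1⟩ := hvc hvc'
      by_cases hadj : G.Adj v c
      · refine ⟨delE G v c, ?_, fun h => absurd h hvc', fun _ => ?_⟩
        · intro u hu1 hu2
          exact delE_deg_other G hadj hu1 hu2
        · exact ⟨delE_deg_a G hadj, delE_deg_b G hadj⟩
      · obtain ⟨b, hcb, hcbH⟩ := exists_G_only G H c (by omega)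
        have hbv : b ≠ v := by rintro rfl; exact hadj hcb.symm
        have hbc : b ≠ c := (G.ne_of_adj hcb).symm
        have hbcG : G.Adj b c := hcb.symm
        have hbcH : ¬ H.Adj b c := fun h => hcbH h.symm
        have hdegb : G.degree b = H.degree b := hbal b hbv hbc
        obtain ⟨c', hbc'H, hbc'G⟩ := exists_H_only G H hdegb hbcG hbcH
        have hc'c : c' ≠ c := by rintro rfl; exact hbcH hbc'H
        have hbc' : b ≠ c' := H.ne_of_adj hbc'H
        have hcc' : c ≠ c' := fun h => hc'c h.symm
        set G₂ := rot G b c c' with hG₂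
        have e1 : G₂.degree c + 1 = G.degree c := rot_deg_x G hbcG hbc'G hcc' hbc'
        have e2 : G₂.degree c' = G.degree c' + 1 := rot_deg_y G hbcG hbc'G hcc' hbc'
        have e3 : G₂.degree b = G.degree b := rot_deg_a G hbcG hbc'G hcc' hbc'
        have e4 : ∀ u, u ≠ b → u ≠ c → u ≠ c' → G₂.degree u = G.degree u :=
          fun u h1 h2 h3 => rot_deg_other G hbcG hbc'G hcc' hbc' h1 h2 h3
        have hdisc : disc G₂ H ≤ D := by
          have := disc_rot_lt G H hbcG hbc'G hcc' hbc' hbcH hbc'H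
          rw [← hG₂] at this
          omega
        rcases eq_or_ne v c' with rfl | hvC'
        · -- back to closed shape at v
          have e2v : G₂.degree v = G.degree v + 1 := e2
          obtain ⟨G', hb', hcl1, _⟩ := ih G₂ H v v hdisc
            (by
              intro u hu1 _
              by_cases huc : u = c
              · subst huc
                omega
              · by_cases hub : u = b
                · subst hub; rw [e3]; exact hdegb
                · rw [e4 u hub huc hu1]; exact hbal u hu1 huc)
            (fun _ => by omega)
            (fun h => absurd rfl h)
          have f1 := hcl1 rfl
          refine ⟨G', ?_, fun h => absurd h hvc', fun _ => ⟨by omega, ?_⟩⟩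
          · intro u hu1 hu2
            by_cases hub : u = b
            · subst hub; rw [hb' u hu1 hu1, e3]
            · rw [hb' u hu1 hu1, e4 u hub hu2 hu1]
          · -- c: G'.degree c + 1 = G.degree c
            have := hb' c (fun h => hvc' h.symm) (fun h => hvc' h.symm)
            omega
        · -- still open shape, endpoint moves to c'
          have hc'v : c' ≠ v := fun h => hvC' h.symm
          have hvb : v ≠ b := fun h => hbv h.symm
          have hvne : v ≠ c := hvc'
          have hdegv : G₂.degree v = G.degree v := e4 v hvb hvne hvC'
          obtain ⟨G', hb', _, hcl2⟩ := ih G₂ H v c' hdisc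
            (by
              intro u hu1 hu2
              by_cases huc : u = c
              · subst huc; omega
              · by_cases hub : u = b
                · subst hub; rw [e3]; exact hdegb
                · rw [e4 u hub huc hu2]; exact hbal u hu1 huc)
            (fun h => absurd h hvC')
            (by
              intro _
              refine ⟨by omega, ?_⟩
              rw [e2, hbal c' (fun h => hc'v h) hc'c])
          obtain ⟨f1, f2⟩ := hcl2 hvC'
          refine ⟨G', ?_, fun h => absurd h hvc', fun _ => ⟨by omega, ?_⟩⟩
          · intro u hu1 hu2
            by_cases huc' : u = c'
            · subst huc'
              omega
            · by_cases hub : u = b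
              · subst hub; rw [hb' u hu1 huc', e3]
              · rw [hb' u hu1 huc', e4 u hub hu2 huc']
          · -- c
            have hcv : c ≠ v := fun h => hvc' h.symm
            have := hb' c hcv hc'c.symm
            omega

end MainInduction
section Extension
variable {n : ℕ}

/-- Extend a graph on `Fin n` to `Fin (n+1)` with the last vertex isolated. -/
def extG (H : SimpleGraph (Fin n)) : SimpleGraph (Fin (n + 1)) where
  Adj i j := ∃ (hi : i ≠ Fin.last n) (hj : j ≠ Fin.last n),
    H.Adj (i.castPred hi) (j.castPred hj)
  symm := by constructor; rintro i j ⟨hi, hj, h⟩; exact ⟨hj, hi, h.symm⟩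
  loopless := by constructor; rintro i ⟨hi, hj, h⟩; exact H.loopless.irrefl _ h

lemma extG_adj (H : SimpleGraph (Fin n)) (i j : Fin (n + 1)) :
    (extG H).Adj i j ↔ ∃ (hi : i ≠ Fin.last n) (hj : j ≠ Fin.last n),
      H.Adj (i.castPred hi) (j.castPred hj) := Iff.rfl

lemma extG_deg_last (H : SimpleGraph (Fin n)) : (extG H).degree (Fin.last n) = 0 := by
  have h : (extG H).neighborFinset (Fin.last n) = ∅ := by
    ext j
    simp only [mem_neighborFinset, extG_adj, Finset.notMem_empty, iff_false]
    rintro ⟨hi, -, -⟩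
    exact hi rfl
  simp [SimpleGraph.degree, h]

lemma extG_deg_castSucc (H : SimpleGraph (Fin n)) (i : Fin n) :
    (extG H).degree (Fin.castSucc i) = H.degree i := by
  have h : (extG H).neighborFinset (Fin.castSucc i)
      = (H.neighborFinset i).map Fin.castSuccEmb := by
    ext j
    simp only [mem_neighborFinset, extG_adj, Finset.mem_map, Fin.coe_castSuccEmb]
    constructor
    · rintro ⟨hi, hj, h⟩
      refine ⟨j.castPred hj, ?_, ?_⟩
      · rwa [Fin.castPred_castSucc] at h
      · exact Fin.castSucc_castPred j hj
    · rintro ⟨k, hk, rfl⟩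
      refine ⟨(Fin.castSucc_lt_last i).ne, (Fin.castSucc_lt_last k).ne, ?_⟩
      rwa [Fin.castPred_castSucc, Fin.castPred_castSucc]
  simp only [SimpleGraph.degree, h, Finset.card_map]

end Extension

/-- A finite sequence of natural numbers is *graphic* if it is the degree
sequence of some simple graph (on vertex set `Fin m`). -/
def Graphic {m : ℕ} (d : Fin m → ℕ) : Prop :=
  ∃ G : SimpleGraph (Fin m), ∀ i, G.degree i = d i

/-- If `d` is an arranged graphic sequence on `n` vertices, `δ ≤ n` is a positive
even integer and `d` with `δ` appended is graphic, then `d` with `δ'"'"'` appended is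
graphic for every even `0 < δ'"'"' < δ`. -/
theorem extension_monotone
    {n : ℕ} (d : Fin n → ℕ) (hd : Antitone d) (hgraphic : Graphic d)
    (δ : ℕ) (hδeven : Even δ) (hδpos : 0 < δ) (hδn : δ ≤ n)
    (hext : Graphic (Fin.snoc d δ)) :
    ∀ δ' : ℕ, Even δ' → 0 < δ' → δ' < δ → Graphic (Fin.snoc d δ') := by
  intro δ' hδ'even hδ'pos hδ'lt
  obtain ⟨H, hH⟩ := hgraphic
  obtain ⟨G0, hG0⟩ := hext
  have step : ∀ (G : SimpleGraph (Fin (n + 1))) (k : ℕ),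
      G.degree (Fin.last n) = k + 2 →
      (∀ i : Fin n, G.degree (Fin.castSucc i) = d i) →
      ∃ G' : SimpleGraph (Fin (n + 1)), G'.degree (Fin.last n) = k ∧
        ∀ i : Fin n, G'.degree (Fin.castSucc i) = d i := by
    intro G k hlast hrest
    obtain ⟨G', hb, hcl, -⟩ := main_lemma (disc G (extG H)) G (extG H) (Fin.last n) (Fin.last n)
      le_rfl
      (by
        intro u hu _
        obtain ⟨i, rfl⟩ := Fin.exists_castSucc_eq.mpr hu
        rw [hrest i, extG_deg_castSucc, hH])
      (fun _ => by rw [extG_deg_last]; omega)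
      (fun h => absurd rfl h)
    refine ⟨G', by have := hcl rfl; omega, fun i => ?_⟩
    rw [hb _ (Fin.castSucc_lt_last i).ne (Fin.castSucc_lt_last i).ne, hrest i]
  have key : ∀ (m k : ℕ) (G : SimpleGraph (Fin (n + 1))),
      G.degree (Fin.last n) = k + 2 * m →
      (∀ i : Fin n, G.degree (Fin.castSucc i) = d i) →
      ∃ G' : SimpleGraph (Fin (n + 1)), G'.degree (Fin.last n) = k ∧
        ∀ i : Fin n, G'.degree (Fin.castSucc i) = d i := by
    intro m
    induction m with
    | zero => exact fun k G h1 h2 => ⟨G, by simpa using h1, h2⟩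
    | succ m ihm =>
      intro k G h1 h2
      obtain ⟨G', hg1, hg2⟩ := step G (k + 2 * m) (by omega) h2
      exact ihm k G' hg1 hg2
  obtain ⟨t, ht⟩ : ∃ t, δ = δ' + 2 * t := by
    obtain ⟨s, hs⟩ := (Nat.even_sub hδ'lt.le).mpr (iff_of_true hδeven hδ'even)
    exact ⟨s, by omega⟩
  obtain ⟨G', h1, h2⟩ := key t δ' G0
    (by
      have hl := hG0 (Fin.last n)
      rw [Fin.snoc_last] at hl
      rw [hl]
      omega)
    (fun i => by
      have := hG0 (Fin.castSucc i)
      rwa [Fin.snoc_castSucc] at this)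
  refine ⟨G', fun i => ?_⟩
  refine Fin.lastCases ?_ (fun j => ?_) i
  · rw [Fin.snoc_last]; exact h1
  · rw [Fin.snoc_castSucc]; exact h2 j
end
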